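/- arXiv:2106.15418 — 6 statements merged into one kernel-verified Lean document; each statement's English description precedes it below -/
import Mathlib

section
/- The skew-symmetric bilinear form Omega on R^{2n} defined by Omega(x,y) = sum_{i=1}^n (x_i y_{ĩ} - x_{ĩ} y_i) + sum_{j=1}^{n-1} (x_{j+1} y_{j̃} - x_{j̃} y_{j+1}) + (-1)^n (x_1 y_{ñ} - x_{ñ} y_1) has a two-dimensional kernel spanned by the vectors (0,1,0,-1,...,0,(-1)^{n-1}) and (1,0,-1,0,...,(-1)^{n-1},0). -/
/-- The unmarked coordinate `x_{i+1}` (0-based `i`) of a vector in ℝ^{2n}: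
coordinates are listed in the order 1, 1̃, 2, 2̃, …, n, ñ. -/
def unmCoord {n : ℕ} (x : Fin (2 * n) → ℝ) (i : ℕ) : ℝ :=
  if h : 2 * i < 2 * n then x ⟨2 * i, h⟩ else 0

/-- The tilde coordinate `x_{(i+1)~}` (0-based `i`) of a vector in ℝ^{2n}. -/
def tldCoord {n : ℕ} (x : Fin (2 * n) → ℝ) (i : ℕ) : ℝ :=
  if h : 2 * i + 1 < 2 * n then x ⟨2 * i + 1, h⟩ else 0

/-- The skew-symmetric bilinear form Ω on ℝ^{2n}. -/
def Omega (n : ℕ) (x y : Fin (2 * n) → ℝ) : ℝ :=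
  (∑ i ∈ Finset.range n,
      (unmCoord x i * tldCoord y i - tldCoord x i * unmCoord y i)) +
  (∑ j ∈ Finset.range (n - 1),
      (unmCoord x (j + 1) * tldCoord y j - tldCoord x j * unmCoord y (j + 1))) +
  (-1 : ℝ) ^ n *
      (unmCoord x 0 * tldCoord y (n - 1) - tldCoord x (n - 1) * unmCoord y 0)

/-- The skew-symmetric bilinear form Ω^D on ℝ^{2n}, with cyclic indices mod n. -/
def OmegaD (n : ℕ) (x y : Fin (2 * n) → ℝ) : ℝ :=
  (∑ i ∈ Finset.range n,
      (unmCoord x i * tldCoord y i - tldCoord x i * unmCoord y i)) +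
  (∑ j ∈ Finset.range n,
      (tldCoord x j * unmCoord y ((j + 1) % n) -
        unmCoord x ((j + 1) % n) * tldCoord y j))

/-! Pairing a kernel vector `v` with the basis vector of the coordinate `j̃` (resp. `j + 1`)
gives `v_{j+1} = -v_j` (resp. `v_{(j+1)~} = -v_{j̃}`), so `v` is determined by `v_1` and `v_{1̃}`.
Conversely, for the two alternating vectors the sums in `Ω` telescope, and the twisted term
`(-1)^n (x_1 y_ñ - x_ñ y_1)` cancels what is left because `(-1)^n (-1)^(n-1) = -1`. -/

lemma eq_neg_one_pow_mul_of_succ_eq_neg {R : Type*} [Ring R] {m : ℕ} {f : ℕ → R}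
    (h : ∀ j, j + 1 < m → f (j + 1) = -f j) : ∀ i < m, f i = (-1) ^ i * f 0 := by
  intro i
  induction i with
  | zero => simp
  | succ k ih =>
    intro hk
    rw [h k hk, ih (by omega), pow_succ, mul_neg_one, neg_mul]

namespace Omega

variable {n : ℕ}

lemma unmCoord_add (x y : Fin (2 * n) → ℝ) (i : ℕ) :
    unmCoord (x + y) i = unmCoord x i + unmCoord y i := by
  unfold unmCoord; split <;> simp

lemma tldCoord_add (x y : Fin (2 * n) → ℝ) (i : ℕ) :
    tldCoord (x + y) i = tldCoord x i + tldCoord y i := by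
  unfold tldCoord; split <;> simp

lemma unmCoord_smul (a : ℝ) (x : Fin (2 * n) → ℝ) (i : ℕ) :
    unmCoord (a • x) i = a * unmCoord x i := by
  unfold unmCoord; split <;> simp

lemma tldCoord_smul (a : ℝ) (x : Fin (2 * n) → ℝ) (i : ℕ) :
    tldCoord (a • x) i = a * tldCoord x i := by
  unfold tldCoord; split <;> simp

lemma ext_unmCoord_tldCoord {x y : Fin (2 * n) → ℝ}
    (hu : ∀ i < n, unmCoord x i = unmCoord y i) (ht : ∀ i < n, tldCoord x i = tldCoord y i) :
    x = y := by
  funext ⟨k, hk⟩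
  obtain ⟨i, rfl | rfl⟩ := Nat.even_or_odd' k
  · simpa [unmCoord, hk] using hu i (by omega)
  · simpa [tldCoord, hk] using ht i (by omega)

lemma add_left (x y w : Fin (2 * n) → ℝ) : Omega n (x + y) w = Omega n x w + Omega n y w := by
  simp only [Omega, unmCoord_add, tldCoord_add, add_mul, add_sub_add_comm,
    Finset.sum_add_distrib]
  ring

lemma smul_left (a : ℝ) (x w : Fin (2 * n) → ℝ) : Omega n (a • x) w = a * Omega n x w := by
  simp only [Omega, unmCoord_smul, tldCoord_smul, mul_assoc, ← mul_sub, ← Finset.mul_sum]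
  ring

def kernel (n : ℕ) : Submodule ℝ (Fin (2 * n) → ℝ) where
  carrier := {v | ∀ w, Omega n v w = 0}
  add_mem' hx hy w := by rw [add_left, hx w, hy w, add_zero]
  zero_mem' w := by simpa using smul_left 0 0 w
  smul_mem' a _ hx w := by rw [smul_left, hx w, mul_zero]

lemma unmCoord_single_odd (j : ℕ) (h : 2 * j + 1 < 2 * n) (i : ℕ) :
    unmCoord (Pi.single (⟨2 * j + 1, h⟩ : Fin (2 * n)) (1 : ℝ)) i = 0 := by
  unfold unmCoord
  split
  · exact Pi.single_eq_of_ne (by simp [Fin.ext_iff]; omega) 1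
  · rfl

lemma tldCoord_single_odd (j : ℕ) (h : 2 * j + 1 < 2 * n) (i : ℕ) :
    tldCoord (Pi.single (⟨2 * j + 1, h⟩ : Fin (2 * n)) (1 : ℝ)) i = if i = j then 1 else 0 := by
  unfold tldCoord
  split
  · rcases eq_or_ne i j with rfl | hij
    · simp
    · rw [if_neg hij]
      exact Pi.single_eq_of_ne (by simp [Fin.ext_iff]; omega) 1
  · rw [if_neg (by omega)]

lemma unmCoord_single_even (j : ℕ) (h : 2 * j < 2 * n) (i : ℕ) :
    unmCoord (Pi.single (⟨2 * j, h⟩ : Fin (2 * n)) (1 : ℝ)) i = if i = j then 1 else 0 := by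
  unfold unmCoord
  split
  · rcases eq_or_ne i j with rfl | hij
    · simp
    · rw [if_neg hij]
      exact Pi.single_eq_of_ne (by simp [Fin.ext_iff]; omega) 1
  · rw [if_neg (by omega)]

lemma tldCoord_single_even (j : ℕ) (h : 2 * j < 2 * n) (i : ℕ) :
    tldCoord (Pi.single (⟨2 * j, h⟩ : Fin (2 * n)) (1 : ℝ)) i = 0 := by
  unfold tldCoord
  split
  · exact Pi.single_eq_of_ne (by simp [Fin.ext_iff]; omega) 1
  · rfl

lemma unmCoord_succ_of_mem_kernel {v : Fin (2 * n) → ℝ} (hv : v ∈ kernel n) {j : ℕ}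
    (hj : j + 1 < n) : unmCoord v (j + 1) = -unmCoord v j := by
  have h := hv (Pi.single (⟨2 * j + 1, by omega⟩ : Fin (2 * n)) 1)
  simp only [Omega, unmCoord_single_odd, tldCoord_single_odd, mul_ite, mul_one, mul_zero,
    sub_zero, Finset.sum_ite_eq', Finset.mem_range] at h
  rw [if_pos (by omega), if_pos (by omega), if_neg (by omega)] at h
  linarith

lemma tldCoord_succ_of_mem_kernel {v : Fin (2 * n) → ℝ} (hv : v ∈ kernel n) {j : ℕ}
    (hj : j + 1 < n) : tldCoord v (j + 1) = -tldCoord v j := by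
  have h := hv (Pi.single (⟨2 * (j + 1), by omega⟩ : Fin (2 * n)) 1)
  simp only [Omega, unmCoord_single_even, tldCoord_single_even, mul_ite, mul_one, mul_zero,
    zero_sub, Finset.sum_neg_distrib, Finset.sum_ite_eq', Finset.mem_range, add_left_inj] at h
  rw [if_pos (by omega), if_pos (by omega), if_neg (by omega)] at h
  linarith

def altTld (n : ℕ) : Fin (2 * n) → ℝ :=
  fun k => if (k : ℕ) % 2 = 1 then (-1) ^ ((k : ℕ) / 2) else 0

def altUnm (n : ℕ) : Fin (2 * n) → ℝ :=
  fun k => if (k : ℕ) % 2 = 0 then (-1) ^ ((k : ℕ) / 2) else 0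

lemma unmCoord_altTld (i : ℕ) : unmCoord (altTld n) i = 0 := by
  unfold unmCoord altTld
  split <;> simp

lemma tldCoord_altTld {i : ℕ} (hi : i < n) : tldCoord (altTld n) i = (-1) ^ i := by
  simp [tldCoord, altTld, show 2 * i + 1 < 2 * n by omega, Nat.mul_add_div]

lemma unmCoord_altUnm {i : ℕ} (hi : i < n) : unmCoord (altUnm n) i = (-1) ^ i := by
  simp [unmCoord, altUnm, hi]

lemma tldCoord_altUnm (i : ℕ) : tldCoord (altUnm n) i = 0 := by
  unfold tldCoord altUnm
  split <;> simp

lemma eq_of_mem_kernel {v : Fin (2 * n) → ℝ} (hv : v ∈ kernel n) :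
    tldCoord v 0 • altTld n + unmCoord v 0 • altUnm n = v := by
  refine ext_unmCoord_tldCoord (fun i hi => ?_) (fun i hi => ?_)
  · rw [unmCoord_add, unmCoord_smul, unmCoord_smul, unmCoord_altTld, unmCoord_altUnm hi,
      eq_neg_one_pow_mul_of_succ_eq_neg (fun _ => unmCoord_succ_of_mem_kernel hv) i hi]
    ring
  · rw [tldCoord_add, tldCoord_smul, tldCoord_smul, tldCoord_altUnm, tldCoord_altTld hi,
      eq_neg_one_pow_mul_of_succ_eq_neg (fun _ => tldCoord_succ_of_mem_kernel hv) i hi]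
    ring

lemma mem_kernel_zero (v : Fin (2 * 0) → ℝ) : v ∈ kernel 0 := fun w => by
  simp [Omega, unmCoord]

lemma altTld_mem_kernel (n : ℕ) : altTld n ∈ kernel n := by
  rcases n with _ | m
  · exact mem_kernel_zero _
  intro w
  have h₁ : ∑ i ∈ Finset.range (m + 1), tldCoord (altTld (m + 1)) i * unmCoord w i =
      unmCoord w 0 - ∑ j ∈ Finset.range m, (-1) ^ j * unmCoord w (j + 1) := by
    rw [Finset.sum_range_succ', tldCoord_altTld (Nat.succ_pos m), sub_eq_neg_add,
      ← Finset.sum_neg_distrib, pow_zero, one_mul]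
    congr 1
    refine Finset.sum_congr rfl fun i hi => ?_
    rw [tldCoord_altTld (by simp at hi; omega), pow_succ]
    ring
  have h₂ : ∑ j ∈ Finset.range m, tldCoord (altTld (m + 1)) j * unmCoord w (j + 1) =
      ∑ j ∈ Finset.range m, (-1) ^ j * unmCoord w (j + 1) :=
    Finset.sum_congr rfl fun j hj => by rw [tldCoord_altTld (by simp at hj; omega)]
  have hsq : (-1 : ℝ) ^ m * (-1) ^ m = 1 := by rw [← mul_pow]; simp
  simp only [Omega, unmCoord_altTld, zero_mul, zero_sub, Finset.sum_neg_distrib,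
    Nat.add_sub_cancel, h₁, h₂, tldCoord_altTld (lt_add_one m)]
  linear_combination unmCoord w 0 * hsq

lemma altUnm_mem_kernel (n : ℕ) : altUnm n ∈ kernel n := by
  rcases n with _ | m
  · exact mem_kernel_zero _
  intro w
  have h₁ : ∑ i ∈ Finset.range (m + 1), unmCoord (altUnm (m + 1)) i * tldCoord w i =
      ∑ i ∈ Finset.range m, (-1) ^ i * tldCoord w i + (-1) ^ m * tldCoord w m := by
    rw [Finset.sum_range_succ, unmCoord_altUnm (lt_add_one m)]
    congr 1
    exact Finset.sum_congr rfl fun i hi => by rw [unmCoord_altUnm (by simp at hi; omega)]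
  have h₂ : ∑ j ∈ Finset.range m, unmCoord (altUnm (m + 1)) (j + 1) * tldCoord w j =
      -∑ j ∈ Finset.range m, (-1) ^ j * tldCoord w j := by
    rw [← Finset.sum_neg_distrib]
    refine Finset.sum_congr rfl fun j hj => ?_
    rw [unmCoord_altUnm (by simp at hj; omega), pow_succ]
    ring
  simp only [Omega, tldCoord_altUnm, zero_mul, sub_zero, Nat.add_sub_cancel, h₁, h₂,
    unmCoord_altUnm (Nat.succ_pos m)]
  ring

end Omega

theorem omega_kernel_general (n : ℕ)
    (v₁ v₂ : Fin (2 * n) → ℝ)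
    (hv₁ : v₁ = fun k : Fin (2 * n) => if (k : ℕ) % 2 = 1 then (-1 : ℝ) ^ ((k : ℕ) / 2) else 0)
    (hv₂ : v₂ = fun k : Fin (2 * n) => if (k : ℕ) % 2 = 0 then (-1 : ℝ) ^ ((k : ℕ) / 2) else 0) :
    {v : Fin (2 * n) → ℝ | ∀ w, Omega n v w = 0} =
      (Submodule.span ℝ {v₁, v₂} : Set (Fin (2 * n) → ℝ)) := by
  change (Omega.kernel n : Set (Fin (2 * n) → ℝ)) = Submodule.span ℝ {v₁, v₂}
  rw [SetLike.coe_set_eq, hv₁, hv₂]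
  refine le_antisymm (fun v hv => ?_) (Submodule.span_le.mpr ?_)
  · exact Submodule.mem_span_pair.mpr ⟨_, _, Omega.eq_of_mem_kernel hv⟩
  · rintro _ (rfl | rfl)
    exacts [Omega.altTld_mem_kernel n, Omega.altUnm_mem_kernel n]

/-- The kernel of Ω is two-dimensional, spanned by (0,1,0,-1,…,0,(-1)^{n-1}) and
(1,0,-1,0,…,(-1)^{n-1},0). -/
theorem omega_kernel (n : ℕ) (hn : 2 ≤ n)
    (v₁ v₂ : Fin (2 * n) → ℝ)
    (hv₁ : v₁ = fun k : Fin (2 * n) => if (k : ℕ) % 2 = 1 then (-1 : ℝ) ^ ((k : ℕ) / 2) else 0)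
    (hv₂ : v₂ = fun k : Fin (2 * n) => if (k : ℕ) % 2 = 0 then (-1 : ℝ) ^ ((k : ℕ) / 2) else 0) :
    {v : Fin (2 * n) → ℝ | ∀ w, Omega n v w = 0} =
      (Submodule.span ℝ {v₁, v₂} : Set (Fin (2 * n) → ℝ)) :=
  omega_kernel_general n v₁ v₂ hv₁ hv₂
end

section
/- The skew-symmetric bilinear form Omega^D on R^{2n} defined by Omega^D(x,y) = sum_{i=1}^n (x_i y_{ĩ} - x_{ĩ} y_i) + sum_{j=1}^{n} (x_{j̃} y_{j+1} - x_{j+1} y_{j̃}) (indices cyclic modulo n) has kernel spanned by (1,0,1,0,...,1,0) and (0,1,0,1,...,0,1). -/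
/-!
Splitting `Ω^D(v, w)` according to the coordinates of `w`, the coefficient of `w_{j̃}` is
`v_j - v_{j+1}` and that of `w_{j+1}` is `v_{j̃} - v_{(j+1)~}`. Hence `v` lies in the kernel
exactly when both families of coordinates `v_j` and `v_{j̃}` are constant, i.e. when `v` is a
combination of `(1,0,…,1,0)` and `(0,1,…,0,1)`; conversely such constant vectors pair to zero
with everything because the cyclic shift `j ↦ j + 1` permutes the indices.
-/

open Finset

theorem Finset.sum_range_add_one_mod {M : Type*} [AddCommMonoid M] (n : ℕ) (f : ℕ → M) :
    ∑ j ∈ range n, f ((j + 1) % n) = ∑ j ∈ range n, f j := by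
  cases n with
  | zero => simp
  | succ m =>
    rw [sum_range_succ, sum_range_succ', Nat.mod_self]
    congr 1
    exact sum_congr rfl fun j hj => by
      rw [Nat.mod_eq_of_lt (by simpa using hj)]

theorem Nat.add_one_mod_eq_add_one_iff {j k n : ℕ} (hj : j < n) (hk : k + 1 < n) :
    (j + 1) % n = k + 1 ↔ j = k := by
  obtain h | h : j + 1 < n ∨ j + 1 = n := by omega
  · rw [Nat.mod_eq_of_lt h]
    omega
  · rw [h, Nat.mod_self]
    omega

section Coordinates

variable {n : ℕ}

theorem unmCoord_of_lt (x : Fin (2 * n) → ℝ) {i : ℕ} (hi : i < n) :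
    unmCoord x i = x ⟨2 * i, by omega⟩ :=
  dif_pos _

theorem tldCoord_of_lt (x : Fin (2 * n) → ℝ) {i : ℕ} (hi : i < n) :
    tldCoord x i = x ⟨2 * i + 1, by omega⟩ :=
  dif_pos _

theorem ext_of_unmCoord_of_tldCoord {x y : Fin (2 * n) → ℝ}
    (hu : ∀ i < n, unmCoord x i = unmCoord y i) (ht : ∀ i < n, tldCoord x i = tldCoord y i) :
    x = y := by
  funext ⟨k, hk⟩
  obtain ⟨i, rfl | rfl⟩ := Nat.even_or_odd' k
  · simpa only [unmCoord_of_lt _ (by omega : i < n)] using hu i (by omega)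
  · simpa only [tldCoord_of_lt _ (by omega : i < n)] using ht i (by omega)

variable {k : ℕ} (hk : k < n)
include hk

theorem unmCoord_single_unm (i : ℕ) :
    unmCoord (Pi.single (⟨2 * k, by omega⟩ : Fin (2 * n)) (1 : ℝ)) i =
      if i = k then 1 else 0 := by
  unfold unmCoord
  split <;> simp [Pi.single_apply, Fin.ext_iff]; omega

theorem tldCoord_single_unm (i : ℕ) :
    tldCoord (Pi.single (⟨2 * k, by omega⟩ : Fin (2 * n)) (1 : ℝ)) i = 0 := by
  unfold tldCoord
  split <;> simp [Pi.single_apply, Fin.ext_iff]; omega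

theorem unmCoord_single_tld (i : ℕ) :
    unmCoord (Pi.single (⟨2 * k + 1, by omega⟩ : Fin (2 * n)) (1 : ℝ)) i = 0 := by
  unfold unmCoord
  split <;> simp [Pi.single_apply, Fin.ext_iff]; omega

theorem tldCoord_single_tld (i : ℕ) :
    tldCoord (Pi.single (⟨2 * k + 1, by omega⟩ : Fin (2 * n)) (1 : ℝ)) i =
      if i = k then 1 else 0 := by
  unfold tldCoord
  split <;> simp [Pi.single_apply, Fin.ext_iff]; omega

end Coordinates

section Kernel

variable {n : ℕ}

theorem omegaD_single_tld (v : Fin (2 * n) → ℝ) {k : ℕ} (hk : k < n) :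
    OmegaD n v (Pi.single ⟨2 * k + 1, by omega⟩ 1) =
      unmCoord v k - unmCoord v ((k + 1) % n) := by
  simp only [OmegaD, unmCoord_single_tld hk, tldCoord_single_tld hk, mul_zero, sub_zero,
    zero_sub, mul_ite, mul_one, sum_neg_distrib, sum_ite_eq', mem_range, hk, if_true]
  ring

theorem omegaD_single_unm (v : Fin (2 * n) → ℝ) {k : ℕ} (hk : k + 1 < n) :
    OmegaD n v (Pi.single ⟨2 * (k + 1), by omega⟩ 1) = tldCoord v k - tldCoord v (k + 1) := by
  have hcycle : ∀ j ∈ range n, (if (j + 1) % n = k + 1 then tldCoord v j else 0) =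
      if k = j then tldCoord v j else 0 := fun j hj =>
    if_congr ((Nat.add_one_mod_eq_add_one_iff (mem_range.mp hj) hk).trans eq_comm) rfl rfl
  simp only [OmegaD, unmCoord_single_unm hk, tldCoord_single_unm hk, mul_zero, sub_zero,
    zero_sub, mul_ite, mul_one, sum_neg_distrib, sum_congr rfl hcycle, sum_ite_eq,
    sum_ite_eq', mem_range, hk, (by omega : k < n), if_true]
  ring

variable {v : Fin (2 * n) → ℝ} (hv : ∀ w, OmegaD n v w = 0)
include hv

theorem unmCoord_eq_unmCoord_zero_of_omegaD_eq_zero : ∀ i < n, unmCoord v i = unmCoord v 0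
  | 0, _ => rfl
  | i + 1, hi => by
    have hstep := omegaD_single_tld v (k := i) (by omega)
    rw [hv, Nat.mod_eq_of_lt hi] at hstep
    rw [← unmCoord_eq_unmCoord_zero_of_omegaD_eq_zero i (by omega)]
    linarith

theorem tldCoord_eq_tldCoord_zero_of_omegaD_eq_zero : ∀ i < n, tldCoord v i = tldCoord v 0
  | 0, _ => rfl
  | i + 1, hi => by
    have hstep := omegaD_single_unm v hi
    rw [hv] at hstep
    rw [← tldCoord_eq_tldCoord_zero_of_omegaD_eq_zero i (by omega)]
    linarith

end Kernel

theorem omegaD_eq_zero_of_coord_const {n : ℕ} {x : Fin (2 * n) → ℝ} {a b : ℝ}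
    (hu : ∀ i < n, unmCoord x i = a) (ht : ∀ i < n, tldCoord x i = b)
    (w : Fin (2 * n) → ℝ) : OmegaD n x w = 0 := by
  have hpair : ∑ i ∈ range n, (unmCoord x i * tldCoord w i - tldCoord x i * unmCoord w i) =
      ∑ i ∈ range n, (a * tldCoord w i - b * unmCoord w i) :=
    sum_congr rfl fun i hi => by rw [hu i (mem_range.mp hi), ht i (mem_range.mp hi)]
  have hcycle : ∑ j ∈ range n, (tldCoord x j * unmCoord w ((j + 1) % n) -
        unmCoord x ((j + 1) % n) * tldCoord w j) =
      ∑ j ∈ range n, (b * unmCoord w ((j + 1) % n) - a * tldCoord w j) :=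
    sum_congr rfl fun j hj => by
      have hj := mem_range.mp hj
      rw [hu _ (Nat.mod_lt _ (by omega)), ht j hj]
  rw [OmegaD, hpair, hcycle, sum_sub_distrib, sum_sub_distrib,
    sum_range_add_one_mod n fun i => b * unmCoord w i]
  ring

theorem omegaD_kernel_general (n : ℕ)
    (v₁ v₂ : Fin (2 * n) → ℝ)
    (hv₁ : v₁ = fun k : Fin (2 * n) => if (k : ℕ) % 2 = 0 then (1 : ℝ) else 0)
    (hv₂ : v₂ = fun k : Fin (2 * n) => if (k : ℕ) % 2 = 1 then (1 : ℝ) else 0) :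
    {v : Fin (2 * n) → ℝ | ∀ w, OmegaD n v w = 0} =
      (Submodule.span ℝ {v₁, v₂} : Set (Fin (2 * n) → ℝ)) := by
  have hcoord (c d : ℝ) (i : ℕ) (hi : i < n) :
      unmCoord (c • v₁ + d • v₂) i = c ∧ tldCoord (c • v₁ + d • v₂) i = d := by
    simp [unmCoord_of_lt _ hi, tldCoord_of_lt _ hi, hv₁, hv₂, Nat.add_mod]
  ext v
  simp only [Set.mem_ofPred_eq, SetLike.mem_coe, Submodule.mem_span_pair]
  constructor
  · intro hv
    refine ⟨unmCoord v 0, tldCoord v 0,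
      ext_of_unmCoord_of_tldCoord (fun i hi => ?_) fun i hi => ?_⟩
    · rw [(hcoord _ _ i hi).1, unmCoord_eq_unmCoord_zero_of_omegaD_eq_zero hv i hi]
    · rw [(hcoord _ _ i hi).2, tldCoord_eq_tldCoord_zero_of_omegaD_eq_zero hv i hi]
  · rintro ⟨c, d, rfl⟩
    exact omegaD_eq_zero_of_coord_const (fun i hi => (hcoord c d i hi).1)
      fun i hi => (hcoord c d i hi).2

/-- The kernel of Ω^D is spanned by (1,0,1,0,…,1,0) and (0,1,0,1,…,0,1). -/
theorem omegaD_kernel (n : ℕ) (hn : 2 ≤ n)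
    (v₁ v₂ : Fin (2 * n) → ℝ)
    (hv₁ : v₁ = fun k : Fin (2 * n) => if (k : ℕ) % 2 = 0 then (1 : ℝ) else 0)
    (hv₂ : v₂ = fun k : Fin (2 * n) => if (k : ℕ) % 2 = 1 then (1 : ℝ) else 0) :
    {v : Fin (2 * n) → ℝ | ∀ w, OmegaD n v w = 0} =
      (Submodule.span ℝ {v₁, v₂} : Set (Fin (2 * n) → ℝ)) :=
  omegaD_kernel_general n v₁ v₂ hv₁ hv₂
end

section
/- Let v_1,...,v_{n+1} be vectors in R^{2n} with v_1 ∧ ... ∧ v_{n+1} ≠ 0. Then kappa(v_1 ∧ ... ∧ v_{n+1}) = 0 if and only if span(v_1,...,v_{n+1}) is isotropic with respect to Omega. -/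
/-!
If `v₁ ∧ … ∧ v_{n+1} ≠ 0`, the `vᵢ` are linearly independent, so the wedges of their
`(n-1)`-element subfamilies, taken in increasing order, are linearly independent in the exterior
algebra. The term of `κ(v₁ ∧ … ∧ v_{n+1})` indexed by `p < q` is `±Ω(v_p, v_q)` times the wedge of
the subfamily omitting `p` and `q`, and distinct pairs omit distinct subfamilies. Hence `κ` vanishes
iff `Ω(v_p, v_q) = 0` for all `p < q`. By skew-symmetry this holds for all `p, q`, and by
bilinearity it extends to the span.
-/

/-- The family obtained from v : Fin (n+1) → V by omitting the entries at
positions p < q, reindexed by Fin (n-1). -/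
def erase2 {α : Type*} {n : ℕ} (v : Fin (n + 1) → α) (p q : Fin (n + 1)) :
    Fin (n - 1) → α :=
  fun i => v ⟨(if (i : ℕ) < (p : ℕ) then (i : ℕ)
      else if (i : ℕ) + 1 < (q : ℕ) then (i : ℕ) + 1 else (i : ℕ) + 2) % (n + 1),
    Nat.mod_lt _ (Nat.succ_pos n)⟩

/-- The value of the map κ : Λ^{n+1}(V) → Λ^{n-1}(V) induced by a bilinear form
Ω on a simple tensor v₁ ∧ … ∧ v_{n+1}:
∑_{p<q} (-1)^{p+q-1} Ω(v_p, v_q) · v₁ ∧ … ∧ v̂_p ∧ … ∧ v̂_q ∧ … ∧ v_{n+1}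
(with 1-based p, q as in the paper; here indices are 0-based). -/
noncomputable def kappaSimple {n : ℕ} (V : Type*) [AddCommGroup V] [Module ℝ V]
    (Ω : V → V → ℝ) (v : Fin (n + 1) → V) : ExteriorAlgebra ℝ V :=
  ∑ p : Fin (n + 1), ∑ q : Fin (n + 1),
    if (p : ℕ) < (q : ℕ) then
      ((-1 : ℝ) ^ ((p : ℕ) + (q : ℕ) + 1) * Ω (v p) (v q)) •
        ExteriorAlgebra.ιMulti ℝ (n - 1) (erase2 v p q)
    else 0

abbrev IncreasingPair (n : ℕ) := {pq : Fin (n + 1) × Fin (n + 1) // (pq.1 : ℕ) < pq.2}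

section erase2

variable {n : ℕ}

lemma val_erase2_id (p q : Fin (n + 1)) (i : Fin (n - 1)) :
    ((erase2 id p q i : Fin (n + 1)) : ℕ) =
      if (i : ℕ) < p then (i : ℕ) else if (i : ℕ) + 1 < q then (i : ℕ) + 1 else (i : ℕ) + 2 := by
  have := i.isLt
  exact Nat.mod_eq_of_lt (by split_ifs <;> omega)

lemma strictMono_erase2_id (p q : Fin (n + 1)) : StrictMono (erase2 (@id (Fin (n + 1))) p q) := by
  intro i j hij
  rw [Fin.lt_def] at hij ⊢
  rw [val_erase2_id, val_erase2_id]
  split_ifs <;> omega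

lemma mem_range_erase2_id {p q : Fin (n + 1)} (hpq : (p : ℕ) < q) {r : Fin (n + 1)} :
    r ∈ Set.range (erase2 (@id (Fin (n + 1))) p q) ↔ r ≠ p ∧ r ≠ q := by
  have := q.isLt
  have := r.isLt
  simp only [Set.mem_range, Fin.ext_iff, ne_eq, val_erase2_id]
  constructor
  · rintro ⟨i, hi⟩
    have := i.isLt
    split_ifs at hi <;> omega
  · rintro ⟨hrp, hrq⟩
    refine ⟨⟨if (r : ℕ) < p then r else if (r : ℕ) < q then r - 1 else r - 2,
      by split_ifs <;> omega⟩, ?_⟩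
    dsimp only
    split_ifs <;> omega

lemma erase2_id_injective :
    Function.Injective fun pq : IncreasingPair n ↦ erase2 (@id (Fin (n + 1))) pq.1.1 pq.1.2 := by
  rintro ⟨⟨p, q⟩, hpq⟩ ⟨⟨p', q'⟩, hpq'⟩ h
  have hrange : ∀ r, r ≠ p ∧ r ≠ q ↔ r ≠ p' ∧ r ≠ q' := fun r ↦ by
    rw [← mem_range_erase2_id hpq, ← mem_range_erase2_id hpq']
    exact congrArg (r ∈ Set.range ·) h |>.to_iff
  have hp := hrange p
  have hq := hrange q
  have hp' := hrange p'
  have hq' := hrange q'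
  simp only [ne_eq, Fin.ext_iff] at hp hq hp' hq'
  obtain ⟨rfl, rfl⟩ : p = p' ∧ q = q' := by
    simp only [Fin.ext_iff]
    grind
  rfl

end erase2

theorem linearIndependent_ιMulti_erase2 {K E : Type*} [Field K] [AddCommGroup E] [Module K E]
    {n : ℕ} {v : Fin (n + 1) → E} (hv : LinearIndependent K v) :
    LinearIndependent K fun pq : IncreasingPair n ↦
      ExteriorAlgebra.ιMulti K (n - 1) (erase2 v pq.1.1 pq.1.2) := by
  let e : IncreasingPair n → Fin (n - 1) ↪o Fin (n + 1) := fun pq ↦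
    OrderEmbedding.ofStrictMono _ (strictMono_erase2_id pq.1.1 pq.1.2)
  have he : Function.Injective e := fun _ _ h ↦ erase2_id_injective (congrArg DFunLike.coe h)
  have hfamily : (fun pq : IncreasingPair n ↦
        ExteriorAlgebra.ιMulti K (n - 1) (erase2 v pq.1.1 pq.1.2)) =
      (⋀[K]^(n - 1) E).subtype ∘ exteriorPower.ιMulti_family K (n - 1) v ∘
        Set.powersetCard.ofFinEmbEquiv ∘ e := by
    ext pq
    simp only [Function.comp_apply, exteriorPower.ιMulti_family, Equiv.symm_apply_apply]
    -- `erase2 v p q` is `v ∘ erase2 id p q` by definition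
    rfl
  rw [hfamily]
  exact ((exteriorPower.ιMulti_family_linearIndependent_field (n - 1) hv).comp _
    (Set.powersetCard.ofFinEmbEquiv.injective.comp he)).map' _ (Submodule.ker_subtype _)

section kappaSimple

variable {V : Type*} [AddCommGroup V] [Module ℝ V] {n : ℕ} (Ω : V → V → ℝ) {v : Fin (n + 1) → V}

lemma kappaSimple_eq_sum :
    kappaSimple V Ω v = ∑ pq : IncreasingPair n,
      ((-1 : ℝ) ^ ((pq.1.1 : ℕ) + pq.1.2 + 1) * Ω (v pq.1.1) (v pq.1.2)) •
        ExteriorAlgebra.ιMulti ℝ (n - 1) (erase2 v pq.1.1 pq.1.2) := by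
  rw [kappaSimple, ← Fintype.sum_prod_type', ← Finset.sum_filter]
  exact Finset.sum_subtype _ (by simp) _

theorem apply_eq_zero_of_kappaSimple_eq_zero (hv : LinearIndependent ℝ v)
    (hκ : kappaSimple V Ω v = 0) {p q : Fin (n + 1)} (hpq : p < q) : Ω (v p) (v q) = 0 := by
  have hcoeff := Fintype.linearIndependent_iff.mp (linearIndependent_ιMulti_erase2 hv) _
    ((kappaSimple_eq_sum Ω).symm.trans hκ) ⟨(p, q), hpq⟩
  simpa using hcoeff

lemma kappaSimple_eq_zero_of_forall_apply_eq_zero (h : ∀ p q, Ω (v p) (v q) = 0) :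
    kappaSimple V Ω v = 0 := by
  simp [kappaSimple, h]

end kappaSimple

lemma forall_apply_eq_zero_of_forall_lt {ι α G : Type*} [LinearOrder ι] [AddGroup G]
    [IsAddTorsionFree G] {Ω : α → α → G} (hskew : ∀ x y, Ω x y = -Ω y x)
    {v : ι → α} (h : ∀ p q, p < q → Ω (v p) (v q) = 0) (p q : ι) : Ω (v p) (v q) = 0 := by
  rcases lt_trichotomy p q with hpq | rfl | hqp
  · exact h p q hpq
  · exact self_eq_neg.mp (hskew _ _)
  · rw [hskew, h q p hqp, neg_zero]

theorem LinearMap.forall_mem_span_apply_eq_zero_iff {R M N P ι κ : Type*} [CommSemiring R]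
    [AddCommMonoid M] [AddCommMonoid N] [AddCommMonoid P] [Module R M] [Module R N] [Module R P]
    (B : M →ₗ[R] N →ₗ[R] P) (v : ι → M) (w : κ → N) :
    (∀ x ∈ Submodule.span R (Set.range v), ∀ y ∈ Submodule.span R (Set.range w), B x y = 0) ↔
      ∀ i j, B (v i) (w j) = 0 := by
  refine ⟨fun h i j ↦ h _ (Submodule.subset_span ⟨i, rfl⟩) _ (Submodule.subset_span ⟨j, rfl⟩),
    fun h x hx y hy ↦ ?_⟩
  have hxw : ∀ j, B x (w j) = 0 := fun j ↦
    LinearMap.eqOn_span' (f := B.flip (w j)) (g := 0) (by rintro _ ⟨i, rfl⟩; exact h i j) hx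
  exact LinearMap.eqOn_span' (f := B x) (g := 0) (by rintro _ ⟨j, rfl⟩; exact hxw j) hy

/-- For a skew-symmetric bilinear form Ω on ℝ^{2n} and v₁ ∧ … ∧ v_{n+1} ≠ 0,
κ(v₁ ∧ … ∧ v_{n+1}) = 0 iff span(v₁, …, v_{n+1}) is Ω-isotropic. -/
theorem kappa_eq_zero_iff_isotropic (n : ℕ)
    (Ω : (Fin (2 * n) → ℝ) →ₗ[ℝ] (Fin (2 * n) → ℝ) →ₗ[ℝ] ℝ)
    (hskew : ∀ x y, Ω x y = -Ω y x)
    (v : Fin (n + 1) → (Fin (2 * n) → ℝ))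
    (hv : ExteriorAlgebra.ιMulti ℝ (n + 1) v ≠ 0) :
    kappaSimple (Fin (2 * n) → ℝ) (fun x y => Ω x y) v = 0 ↔
      ∀ x ∈ Submodule.span ℝ (Set.range v),
        ∀ y ∈ Submodule.span ℝ (Set.range v), Ω x y = 0 := by
  rw [Ω.forall_mem_span_apply_eq_zero_iff]
  refine ⟨fun hκ ↦ ?_, kappaSimple_eq_zero_of_forall_apply_eq_zero (fun x y ↦ Ω x y)⟩
  have hli : LinearIndependent ℝ v := by
    by_contra h
    exact hv (AlternatingMap.map_linearDependent _ v h)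
  exact forall_apply_eq_zero_of_forall_lt hskew fun p q hpq ↦
    apply_eq_zero_of_kappaSimple_eq_zero _ hli hκ hpq
end

section
/- Let (sigma, tilde-sigma) be a Kreweras pair with blocks B_1,...,B_{n+1}, and for each block define the vector v_k in R^{2n} by v_k = sum_{b ∈ B_k} (-1)^b e_b if B_k ⊆ [n], and v_k = sum_{b̃ ∈ B_k} (-1)^b e_{b̃} if B_k ⊆ [ñ]. Then span(v_1,...,v_{n+1}) is isotropic for the form Omega. -/
/-- Noncrossing condition for a partition of {0,…,m-1}. -/
def IsNoncrossing {m : ℕ} (P : Finpartition (Finset.univ : Finset (Fin m))) : Prop :=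
  ∀ B ∈ P.parts, ∀ B' ∈ P.parts, B ≠ B' →
    ¬ ∃ a b c d : Fin m, a < b ∧ b < c ∧ c < d ∧
      a ∈ B ∧ c ∈ B ∧ b ∈ B' ∧ d ∈ B'

/-- Encoding of [n] ⊔ [ñ] inside Fin (2n): the element i of [n] (1-based) is
2(i-1), the element ĩ of [ñ] is 2(i-1)+1, matching the circular order
1, 1̃, 2, 2̃, …, n, ñ. A Kreweras pair (σ, σ̃) is encoded as a single partition of
Fin (2n): it is noncrossing, each block lies entirely in [n] or in [ñ], and
there are n + 1 blocks in total. -/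
def IsKrewerasPair {n : ℕ}
    (P : Finpartition (Finset.univ : Finset (Fin (2 * n)))) : Prop :=
  IsNoncrossing P ∧
  (∀ B ∈ P.parts, (∀ x ∈ B, (x : ℕ) % 2 = 0) ∨ (∀ x ∈ B, (x : ℕ) % 2 = 1)) ∧
  P.parts.card = n + 1

/-- The vector associated to a block B of a Kreweras pair: for an unmarked
block B ⊆ [n], v = ∑_{b ∈ B} (-1)^b e_b, and for a tilde block B ⊆ [ñ],
v = ∑_{b̃ ∈ B} (-1)^b e_{b̃} (signs with 1-based b; index k of Fin (2n)
corresponds to 1-based b = k/2 + 1). -/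
def blockVec {n : ℕ} (B : Finset (Fin (2 * n))) : Fin (2 * n) → ℝ :=
  fun k => if k ∈ B then (-1 : ℝ) ^ ((k : ℕ) / 2 + 1) else 0

/-! Colour position `p` of the cycle `1, 1̃, …, n, ñ` (0-based, unrolled with period `2n`) by the
block containing it. With the signs of `blockVec`, `Ω(v_B, v_C)` counts the steps of this cyclic
walk from `B` to `C` minus those from `C` to `B`. Noncrossing allows at most one step from `B` to
`C`. Every interval of `L` positions meets at least `⌊L/2⌋ + 1` blocks, with equality forcing the
ends of an odd interval into one block; since a Kreweras pair has only `n + 1` blocks, splitting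
the cycle after the last occurrence of `C` shows that a step `B → C` is always answered by a step
`C → B`. Hence `Ω` vanishes on pairs of block vectors, and by bilinearity on their span. -/

open Finset

section IntervalColouring

variable {α : Type*} {g : ℕ → α}

def NoncrossingOn (g : ℕ → α) (lo hi : ℕ) : Prop :=
  ∀ ⦃a b c d : ℕ⦄, lo ≤ a → a < b → b < c → c < d → d < hi → g a = g c → g b = g d →
    g a = g b

theorem NoncrossingOn.mono {lo hi lo' hi' : ℕ} (h : NoncrossingOn g lo hi) (hlo : lo ≤ lo')
    (hhi : hi' ≤ hi) : NoncrossingOn g lo' hi' :=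
  fun _ _ _ _ ha hab hbc hcd hd => h (hlo.trans ha) hab hbc hcd (hd.trans_le hhi)

theorem NoncrossingOn.succ_of_periodic {m s : ℕ} (hg : Function.Periodic g m)
    (h : NoncrossingOn g s (s + m)) : NoncrossingOn g (s + 1) (s + 1 + m) := by
  intro a b c d ha hab hbc hcd hd hac hbd
  rcases (show d ≤ s + m by omega).lt_or_eq with hd' | rfl
  · exact h (by omega) hab hbc hcd hd' hac hbd
  · rw [hg s] at hbd
    rw [← h le_rfl (by omega) hab hbc (by omega) hbd.symm hac, hbd]

variable [DecidableEq α]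

theorem card_image_Ico_eq_add {lo m hi : ℕ} (hlo : lo ≤ m) (hhi : m ≤ hi)
    (hdisj : ∀ a d, lo ≤ a → a < m → m ≤ d → d < hi → g a ≠ g d) :
    #((Ico lo hi).image g) = #((Ico lo m).image g) + #((Ico m hi).image g) := by
  rw [← Ico_union_Ico_eq_Ico hlo hhi, image_union, card_union_of_disjoint]
  simp only [disjoint_left, mem_image, mem_Ico]
  rintro _ ⟨a, ⟨ha₁, ha₂⟩, rfl⟩ ⟨d, ⟨hd₁, hd₂⟩, hd⟩
  exact hdisj a d ha₁ ha₂ hd₁ hd₂ hd.symm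

theorem exists_first_return {lo hi : ℕ} (h : ∃ x, lo < x ∧ x < hi ∧ g x = g lo) :
    ∃ c, lo < c ∧ c < hi ∧ g c = g lo ∧ ∀ x, lo < x → x < c → g x ≠ g lo :=
  ⟨Nat.find h, (Nat.find_spec h).1, (Nat.find_spec h).2.1, (Nat.find_spec h).2.2,
    fun _ hx hxc hgx => Nat.find_min h hxc ⟨hx, hxc.trans (Nat.find_spec h).2.1, hgx⟩⟩

theorem card_image_Ico_of_first_return {lo c hi : ℕ} (hnc : NoncrossingOn g lo hi) (hlc : lo < c)
    (hc : c < hi) (hgc : g c = g lo) (hfirst : ∀ x, lo < x → x < c → g x ≠ g lo) :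
    #((Ico lo hi).image g) = #((Ico (lo + 1) c).image g) + #((Ico c hi).image g) := by
  have hlo : g lo ∈ (Ico (lo + 1) hi).image g := mem_image.2 ⟨c, mem_Ico.2 ⟨hlc, hc⟩, hgc⟩
  rw [← insert_Ico_add_one_left_eq_Ico (hlc.trans hc), image_insert, insert_eq_of_mem hlo]
  refine card_image_Ico_eq_add hlc hc.le fun a d ha had hcd hd hgad => ?_
  rcases hcd.eq_or_lt with rfl | hcd
  · exact hfirst a ha had (hgad.trans hgc)
  · exact hfirst a ha had (hnc le_rfl ha had hcd hd hgc.symm hgad).symm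

theorem card_image_Ico_of_lone {lo hi : ℕ} (hlt : lo < hi)
    (hlone : ¬∃ x, lo < x ∧ x < hi ∧ g x = g lo) :
    #((Ico lo hi).image g) = #((Ico (lo + 1) hi).image g) + 1 := by
  rw [← insert_Ico_add_one_left_eq_Ico hlt, image_insert, card_insert_of_notMem]
  simp only [mem_image, mem_Ico, not_exists, not_and]
  exact fun x hx hgx => hlone ⟨x, by omega, hx.2, hgx⟩

theorem le_card_image_Ico {lo hi : ℕ} (hpar : ∀ p q, g p = g q → p % 2 = q % 2)
    (hnc : NoncrossingOn g lo hi) (hlt : lo < hi) :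
    (hi - lo) / 2 + 1 ≤ #((Ico lo hi).image g) := by
  by_cases h : ∃ x, lo < x ∧ x < hi ∧ g x = g lo
  · obtain ⟨c, hlc, hc, hgc, hfirst⟩ := exists_first_return h
    have hc2 := hpar _ _ hgc
    have := le_card_image_Ico hpar (hnc.mono (Nat.le_add_right lo 1) hc.le) (by omega : lo + 1 < c)
    have := le_card_image_Ico hpar (hnc.mono hlc.le le_rfl) hc
    rw [card_image_Ico_of_first_return hnc hlc hc hgc hfirst]
    omega
  · rw [card_image_Ico_of_lone hlt h]
    rcases (show lo + 1 ≤ hi from hlt).eq_or_lt with hhi | hhi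
    · omega
    · have := le_card_image_Ico hpar (hnc.mono ((Nat.le_add_right lo 1)) le_rfl) hhi
      omega
termination_by hi - lo

theorem eq_of_card_image_Ico_le {lo hi : ℕ} (hpar : ∀ p q, g p = g q → p % 2 = q % 2)
    (hnc : NoncrossingOn g lo hi) (hlt : lo < hi) (hodd : (hi - lo) % 2 = 1)
    (hcard : #((Ico lo hi).image g) ≤ (hi - lo) / 2 + 1) :
    g lo = g (hi - 1) := by
  by_cases h : ∃ x, lo < x ∧ x < hi ∧ g x = g lo
  · obtain ⟨c, hlc, hc, hgc, hfirst⟩ := exists_first_return h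
    have hc2 := hpar _ _ hgc
    have := le_card_image_Ico hpar (hnc.mono (Nat.le_add_right lo 1) hc.le) (by omega : lo + 1 < c)
    rw [card_image_Ico_of_first_return hnc hlc hc hgc hfirst] at hcard
    rw [← hgc]
    exact eq_of_card_image_Ico_le hpar (hnc.mono hlc.le le_rfl) hc (by omega) (by omega)
  · rw [card_image_Ico_of_lone hlt h] at hcard
    rcases (show lo + 1 ≤ hi from hlt).eq_or_lt with hhi | hhi
    · rw [← hhi, Nat.add_sub_cancel]
    · have := le_card_image_Ico hpar (hnc.mono ((Nat.le_add_right lo 1)) le_rfl) hhi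
      omega
termination_by hi - lo

end IntervalColouring

section CyclicColouring

variable {α : Type*} [DecidableEq α] {g : ℕ → α} {n : ℕ}

/-- A Kreweras pair read as a colouring of the positions `0, 1, 2, …` of the cycle `1, 1̃, …, n, ñ`
unrolled with period `2n`, each position coloured by its block. -/
structure IsKrewerasColouring (n : ℕ) (g : ℕ → α) : Prop where
  periodic : Function.Periodic g (2 * n)
  noncrossingOn : NoncrossingOn g 0 (2 * n)
  parity : ∀ p q, g p = g q → p % 2 = q % 2
  card_image_range : #((range (2 * n)).image g) = n + 1

def steps (g : ℕ → α) (m : ℕ) (X Y : α) : Finset ℕ :=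
  (range m).filter fun p => g p = X ∧ g (p + 1) = Y

namespace IsKrewerasColouring

variable (hg : IsKrewerasColouring n g)
include hg

theorem pos : 0 < n := by
  have := hg.card_image_range
  rcases n with _ | n
  · simp at this
  · omega

theorem noncrossingOn_window (s : ℕ) : NoncrossingOn g s (s + 2 * n) := by
  induction s with
  | zero => simpa using hg.noncrossingOn
  | succ s ih => exact ih.succ_of_periodic hg.periodic

theorem image_subset_image_range (s : Finset ℕ) :
    s.image g ⊆ (range (2 * n)).image g := by
  intro y hy
  obtain ⟨p, -, rfl⟩ := mem_image.1 hy
  exact mem_image.2 ⟨p % (2 * n), mem_range.2 (Nat.mod_lt _ (by linarith [hg.pos])),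
    hg.periodic.map_mod_nat p⟩

theorem exists_step_back (p : ℕ) : ∃ q, g q = g (p + 1) ∧ g (q + 1) = g p := by
  have hn := hg.pos
  -- `u` is the last position of the colour of `p + 1` in the period `(p, p + 2n]`; the rest
  -- `(u, p + 2n]` of that period is then a tight interval, so `u + 1` has the colour of `p + 2n`.
  have hne : g (p + 1) ≠ g p := fun h => by have := hg.parity _ _ h; omega
  have hend : g (p + 2 * n) = g p := hg.periodic p
  set u := Nat.findGreatest (fun x => g x = g (p + 1)) (p + 2 * n)
  have hpu : p + 1 ≤ u := Nat.le_findGreatest (by omega) rfl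
  have hgu : g u = g (p + 1) :=
    Nat.findGreatest_spec (P := fun x => g x = g (p + 1)) (by omega) rfl
  have hlast : ∀ x, u < x → x ≤ p + 2 * n → g x ≠ g (p + 1) :=
    fun x hux hx => Nat.findGreatest_is_greatest hux hx
  have hup : u < p + 2 * n := (Nat.findGreatest_le _).lt_of_ne fun h => hne <| by
    rw [← hgu, ← hend]
    exact congrArg g h
  have hnc := hg.noncrossingOn_window (p + 1)
  have hsplit := card_image_Ico_eq_add (g := g) (show p + 1 ≤ u + 1 by omega)
    (show u + 1 ≤ p + 1 + 2 * n by omega) fun a d ha hau hud hd hgad => by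
      refine hlast d (by omega) (by omega) (hgad.symm.trans ?_)
      rcases ha.eq_or_lt with rfl | ha
      · rfl
      rcases (show a ≤ u by omega).eq_or_lt with rfl | hau
      · exact hgu
      exact (hnc le_rfl ha hau (by omega) hd hgu.symm hgad).symm
  have hle := card_le_card (hg.image_subset_image_range (Ico (p + 1) (p + 1 + 2 * n)))
  rw [hsplit, hg.card_image_range] at hle
  have hpar := hg.parity _ _ hgu
  have := le_card_image_Ico hg.parity (hnc.mono le_rfl (by omega)) (show p + 1 < u + 1 by omega)
  have hback := eq_of_card_image_Ico_le hg.parity (hnc.mono (by omega) le_rfl)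
    (show u + 1 < p + 1 + 2 * n by omega) (by omega) (by omega)
  refine ⟨u, hgu, ?_⟩
  rwa [show p + 1 + 2 * n - 1 = p + 2 * n by omega, hend] at hback

theorem steps_nonempty_iff {X Y : α} :
    (steps g (2 * n) X Y).Nonempty ↔ ∃ p, g p = X ∧ g (p + 1) = Y := by
  refine ⟨fun ⟨p, hp⟩ => ⟨p, (mem_filter.1 hp).2⟩, fun ⟨p, hpX, hpY⟩ => ?_⟩
  have hmod : g (p % (2 * n) + 1) = g (p + 1) := by
    rw [← hg.periodic.map_mod_nat (p + 1), ← Nat.mod_add_mod, hg.periodic.map_mod_nat]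
  exact ⟨p % (2 * n), mem_filter.2 ⟨mem_range.2 (Nat.mod_lt _ (by linarith [hg.pos])),
    (hg.periodic.map_mod_nat p).trans hpX, hmod.trans hpY⟩⟩

theorem card_steps_le_one {X Y : α} (hXY : X ≠ Y) : #(steps g (2 * n) X Y) ≤ 1 := by
  have key : ∀ p q, p < q → p ∈ steps g (2 * n) X Y → q ∈ steps g (2 * n) X Y → False := by
    simp only [steps, mem_filter, mem_range]
    rintro p q hpq ⟨-, hpX, hpY⟩ ⟨hq, hqX, hqY⟩
    have hq1 : p + 1 < q := by
      refine lt_of_le_of_ne hpq fun h => hXY ?_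
      rw [← hqX, ← hpY, h]
    rcases (show q + 1 ≤ p + 2 * n by omega).lt_or_eq with hq2 | hq2
    · have := hg.noncrossingOn_window p le_rfl (by omega) hq1 (by omega) hq2
        (hpX.trans hqX.symm) (hpY.trans hqY.symm)
      exact hXY (hpX.symm.trans (this.trans hpY))
    · exact hXY (by rw [← hpX, ← hqY, hq2, hg.periodic p])
  refine card_le_one.2 fun p hp q hq => ?_
  by_contra hpq
  rcases Nat.lt_or_gt_of_ne hpq with h | h
  exacts [key p q h hp hq, key q p h hq hp]

theorem card_steps_symm (X Y : α) : #(steps g (2 * n) X Y) = #(steps g (2 * n) Y X) := by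
  rcases eq_or_ne X Y with rfl | hXY
  · rfl
  have hback : ∀ {X Y : α}, (steps g (2 * n) X Y).Nonempty → (steps g (2 * n) Y X).Nonempty := by
    intro X Y h
    obtain ⟨p, rfl, rfl⟩ := hg.steps_nonempty_iff.1 h
    exact hg.steps_nonempty_iff.2 (hg.exists_step_back p)
  have h₁ := hg.card_steps_le_one hXY
  have h₂ := hg.card_steps_le_one hXY.symm
  have h₃ : 0 < #(steps g (2 * n) X Y) ↔ 0 < #(steps g (2 * n) Y X) := by
    simp only [card_pos]
    exact ⟨hback, hback⟩
  omega

end IsKrewerasColouring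

end CyclicColouring

section Omega

variable {n : ℕ}

theorem unmCoord_add (x y : Fin (2 * n) → ℝ) (i : ℕ) :
    unmCoord (x + y) i = unmCoord x i + unmCoord y i := by
  unfold unmCoord; split_ifs <;> simp

theorem tldCoord_add (x y : Fin (2 * n) → ℝ) (i : ℕ) :
    tldCoord (x + y) i = tldCoord x i + tldCoord y i := by
  unfold tldCoord; split_ifs <;> simp

theorem unmCoord_smul (r : ℝ) (x : Fin (2 * n) → ℝ) (i : ℕ) :
    unmCoord (r • x) i = r * unmCoord x i := by
  unfold unmCoord; split_ifs <;> simp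

theorem tldCoord_smul (r : ℝ) (x : Fin (2 * n) → ℝ) (i : ℕ) :
    tldCoord (r • x) i = r * tldCoord x i := by
  unfold tldCoord; split_ifs <;> simp

def omegaForm (n : ℕ) : LinearMap.BilinForm ℝ (Fin (2 * n) → ℝ) :=
  LinearMap.mk₂ ℝ (Omega n)
    (fun x x' y => by
      simp only [Omega, unmCoord_add, tldCoord_add, add_mul, sub_eq_add_neg, neg_add,
        sum_add_distrib]
      ring)
    (fun r x y => by
      simp only [Omega, unmCoord_smul, tldCoord_smul, mul_assoc, ← mul_sub, ← mul_sum]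
      ring)
    (fun x y y' => by
      simp only [Omega, unmCoord_add, tldCoord_add, mul_add, sub_eq_add_neg, neg_add,
        sum_add_distrib]
      ring)
    (fun r x y => by
      simp only [Omega, unmCoord_smul, tldCoord_smul, mul_left_comm _ r, ← mul_sub, ← mul_sum]
      ring)

end Omega

theorem sum_range_two_mul {M : Type*} [AddCommMonoid M] (f : ℕ → M) (n : ℕ) :
    ∑ p ∈ range (2 * n), f p = ∑ i ∈ range n, (f (2 * i) + f (2 * i + 1)) := by
  induction n with
  | zero => simp
  | succ n ih => rw [Nat.mul_succ, sum_range_succ, sum_range_succ, sum_range_succ, ih, add_assoc]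

section SignedVec

variable {n : ℕ}

def signedVec (n : ℕ) (a : ℕ → ℝ) : Fin (2 * n) → ℝ :=
  fun k => (-1) ^ ((k : ℕ) / 2 + 1) * a k

theorem unmCoord_signedVec (a : ℕ → ℝ) {i : ℕ} (hi : i < n) :
    unmCoord (signedVec n a) i = (-1) ^ (i + 1) * a (2 * i) := by
  rw [unmCoord, dif_pos (by omega), signedVec, Nat.mul_div_cancel_left i two_pos]

theorem tldCoord_signedVec (a : ℕ → ℝ) {i : ℕ} (hi : i < n) :
    tldCoord (signedVec n a) i = (-1) ^ (i + 1) * a (2 * i + 1) := by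
  rw [tldCoord, dif_pos (by omega), signedVec, show (2 * i + 1) / 2 = i by omega]

/-- The factor `(-1)ⁿ` in `Ω` is exactly the sign needed at the wrap-around from `ñ` to `1`. -/
theorem Omega_signedVec (hn : 0 < n) {a b : ℕ → ℝ} (ha : a (2 * n) = a 0)
    (hb : b (2 * n) = b 0) :
    Omega n (signedVec n a) (signedVec n b) =
      ∑ p ∈ range (2 * n), (a p * b (p + 1) - a (p + 1) * b p) := by
  obtain ⟨m, rfl⟩ : ∃ m, n = m + 1 := ⟨n - 1, by omega⟩
  have hsq (k : ℕ) : ((-1 : ℝ) ^ k) ^ 2 = 1 := by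
    rw [← pow_mul, mul_comm, pow_mul, neg_one_sq, one_pow]
  set x := signedVec (m + 1) a
  set y := signedVec (m + 1) b
  have h₁ : ∑ i ∈ range (m + 1), (unmCoord x i * tldCoord y i - tldCoord x i * unmCoord y i) =
      ∑ i ∈ range (m + 1), (a (2 * i) * b (2 * i + 1) - a (2 * i + 1) * b (2 * i)) := by
    refine sum_congr rfl fun i hi => ?_
    have hi : i < m + 1 := mem_range.1 hi
    rw [unmCoord_signedVec a hi, tldCoord_signedVec b hi, tldCoord_signedVec a hi,
      unmCoord_signedVec b hi]
    linear_combination (a (2 * i) * b (2 * i + 1) - a (2 * i + 1) * b (2 * i)) * hsq (i + 1)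
  have h₂ : ∑ j ∈ range m,
      (unmCoord x (j + 1) * tldCoord y j - tldCoord x j * unmCoord y (j + 1)) =
      ∑ j ∈ range m, (a (2 * j + 1) * b (2 * j + 1 + 1) - a (2 * j + 1 + 1) * b (2 * j + 1)) := by
    refine sum_congr rfl fun j hj => ?_
    have hj : j < m := mem_range.1 hj
    rw [unmCoord_signedVec a (by omega : j + 1 < m + 1), tldCoord_signedVec b (by omega),
      tldCoord_signedVec a (by omega), unmCoord_signedVec b (by omega : j + 1 < m + 1),
      show 2 * (j + 1) = 2 * j + 1 + 1 by ring]
    linear_combination (a (2 * j + 1) * b (2 * j + 1 + 1) - a (2 * j + 1 + 1) * b (2 * j + 1)) *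
      hsq (j + 1)
  have h₃ : (-1 : ℝ) ^ (m + 1) * (unmCoord x 0 * tldCoord y m - tldCoord x m * unmCoord y 0) =
      a (2 * m + 1) * b (2 * m + 1 + 1) - a (2 * m + 1 + 1) * b (2 * m + 1) := by
    rw [unmCoord_signedVec a m.succ_pos, tldCoord_signedVec b m.lt_succ_self,
      tldCoord_signedVec a m.lt_succ_self, unmCoord_signedVec b m.succ_pos,
      show 2 * m + 1 + 1 = 2 * (m + 1) by ring, ha, hb]
    linear_combination (a (2 * m + 1) * b 0 - a 0 * b (2 * m + 1)) * hsq (m + 1)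
  rw [Omega, h₁, Nat.add_sub_cancel, h₂, h₃, sum_range_two_mul, sum_add_distrib, add_assoc,
    ← sum_range_succ]

end SignedVec

theorem IsKrewerasColouring.Omega_signedVec_indicator {α : Type*} [DecidableEq α] {g : ℕ → α}
    {n : ℕ} (hg : IsKrewerasColouring n g) (X Y : α) :
    Omega n (signedVec n fun p => if g p = X then 1 else 0)
      (signedVec n fun p => if g p = Y then 1 else 0) = 0 := by
  rw [Omega_signedVec hg.pos (by rw [hg.periodic.eq]) (by rw [hg.periodic.eq]), sum_sub_distrib]
  simp only [ite_zero_mul_ite_zero, mul_one, sum_boole]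
  rw [sub_eq_zero, Nat.cast_inj]
  simpa only [steps, and_comm] using hg.card_steps_symm X Y

section KrewerasPair

variable {n : ℕ} [NeZero (2 * n)] {P : Finpartition (univ : Finset (Fin (2 * n)))}

theorem IsKrewerasPair.isKrewerasColouring (hP : IsKrewerasPair P) :
    IsKrewerasColouring n fun p : ℕ => P.part (Fin.ofNat (2 * n) p) := by
  obtain ⟨hnc, hpar, hcard⟩ := hP
  have hval (p : ℕ) (hp : p < 2 * n) : (Fin.ofNat (2 * n) p : ℕ) = p := by
    rw [Fin.val_ofNat, Nat.mod_eq_of_lt hp]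
  have hmem (p : ℕ) : Fin.ofNat (2 * n) p ∈ P.part (Fin.ofNat (2 * n) p) :=
    P.mem_part (mem_univ _)
  refine ⟨fun p => congrArg P.part (Fin.ext (by simp)), ?_, ?_, ?_⟩
  · intro a b c d _ hab hbc hcd hd hac hbd
    dsimp only at hac hbd ⊢
    by_contra hne
    refine hnc _ (P.part_mem.2 (mem_univ _)) _ (P.part_mem.2 (mem_univ _)) hne
      ⟨Fin.ofNat _ a, Fin.ofNat _ b, Fin.ofNat _ c, Fin.ofNat _ d, ?_, ?_, ?_,
        hmem a, hac ▸ hmem c, hmem b, hbd ▸ hmem d⟩ <;>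
      simp only [Fin.lt_def, hval a (by omega), hval b (by omega), hval c (by omega),
        hval d hd] <;> assumption
  · intro p q hpq
    have hq := hpq ▸ hmem q
    rcases hpar _ (P.part_mem.2 (mem_univ _)) with h | h <;>
    · have := (h _ (hmem p)).trans (h _ hq).symm
      rwa [Fin.val_ofNat, Fin.val_ofNat, Nat.mod_mod_of_dvd _ (dvd_mul_right 2 n),
        Nat.mod_mod_of_dvd _ (dvd_mul_right 2 n)] at this
  · rw [← hcard]
    congr 1
    ext B
    simp only [mem_image, mem_range]
    refine ⟨fun ⟨p, _, hp⟩ => hp ▸ P.part_mem.2 (mem_univ _), fun hB => ?_⟩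
    obtain ⟨k, hk⟩ := P.nonempty_of_mem_parts hB
    exact ⟨k, k.2, by rw [Fin.ofNat_val_eq_self, P.part_eq_of_mem hB hk]⟩

theorem blockVec_eq_signedVec {B : Finset (Fin (2 * n))} (hB : B ∈ P.parts) :
    blockVec B = signedVec n fun p => if P.part (Fin.ofNat (2 * n) p) = B then 1 else 0 := by
  funext k
  simp only [blockVec, signedVec, Fin.ofNat_val_eq_self, P.part_eq_iff_mem hB, mul_ite, mul_one,
    mul_zero]

end KrewerasPair

/-- For a Kreweras pair with blocks B₁, …, B_{n+1}, the span of the associated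
vectors v₁, …, v_{n+1} is isotropic for the form Ω. -/
theorem kreweras_blockVec_span_isotropic (n : ℕ)
    (P : Finpartition (Finset.univ : Finset (Fin (2 * n))))
    (hP : IsKrewerasPair P) :
    ∀ x ∈ Submodule.span ℝ (blockVec '' (P.parts : Set (Finset (Fin (2 * n))))),
      ∀ y ∈ Submodule.span ℝ (blockVec '' (P.parts : Set (Finset (Fin (2 * n))))),
        Omega n x y = 0 := by
  rcases Nat.eq_zero_or_pos n with rfl | hn
  · intro x _ y _
    simp [Omega, unmCoord]
  have : NeZero (2 * n) := ⟨by omega⟩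
  intro x hx y hy
  refine LinearMap.BilinMap.apply_apply_mem_of_mem_span ⊥ _ _ (omegaForm n) ?_ x y hx hy
  rintro _ ⟨B, hB, rfl⟩ _ ⟨C, hC, rfl⟩
  rw [Submodule.mem_bot, omegaForm, LinearMap.mk₂_apply, blockVec_eq_signedVec hB,
    blockVec_eq_signedVec hC]
  exact hP.isKrewerasColouring.Omega_signedVec_indicator B C
end

section
/- The vectors {f_sigma : sigma a noncrossing partition of [n]} are linearly independent in Λ^{n+1}(R^{2n}). -/
/-- The wedge e_{I,Ĩ} of the standard basis vectors of ℝ^{2n} indexed by the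
(n+1)-element set A, taken in increasing order. -/
noncomputable def eWedge (n : ℕ) (A : Finset (Fin (2 * n))) (h : A.card = n + 1) :
    ExteriorAlgebra ℝ (Fin (2 * n) → ℝ) :=
  ExteriorAlgebra.ιMulti ℝ (n + 1)
    (fun i => Pi.single ((A.orderIsoOfFin h i : Fin (2 * n))) (1 : ℝ))

/-- A subset A of [n] ⊔ [ñ] is concordant with the partition P when it meets
every block of P in exactly one element. -/
def Concordant {n : ℕ} (A : Finset (Fin (2 * n)))
    (P : Finpartition (Finset.univ : Finset (Fin (2 * n)))) : Prop :=
  ∀ B ∈ P.parts, (A ∩ B).card = 1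

instance {n : ℕ} (A : Finset (Fin (2 * n)))
    (P : Finpartition (Finset.univ : Finset (Fin (2 * n)))) :
    Decidable (Concordant A P) :=
  Finset.decidableDforallFinset

/-- Lam's vector f_σ = ∑_{(I,Ĩ) concordant with (σ,σ̃)} e_{I,Ĩ}, where the
Kreweras pair (σ,σ̃) is encoded as the partition P of Fin (2n). -/
noncomputable def fSigma (n : ℕ)
    (P : Finpartition (Finset.univ : Finset (Fin (2 * n)))) :
    ExteriorAlgebra ℝ (Fin (2 * n) → ℝ) :=
  ∑ A ∈ ((Finset.univ : Finset (Fin (2 * n))).powersetCard (n + 1)).attach,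
    if Concordant A.1 P then
      eWedge n A.1 (Finset.mem_powersetCard.mp A.2).2
    else 0

/-!
The family is triangular. A Kreweras pair `P` is sent to the set `blockMins P` of minima of its
blocks: it has `n + 1` elements and is concordant with `P`, so `e_{blockMins P}` occurs in `f_P`
with coefficient `1`. If it also occurs in `f_Q`, then `blockMins P` is a transversal of the blocks
of `Q`, so its sum exceeds that of `blockMins Q` unless the two sets coincide, in which case
`P = Q`, because a Kreweras pair is determined by its block minima.

That last fact is the heart of the proof. Blocks have constant parity, so no block contains two
neighbours, and a noncrossing partition of an interval of length `k` with this property has at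
least `(k + 1) / 2` blocks. A Kreweras pair attains the bound on every gap `(p, x)` between
consecutive elements of a block, which recovers `p` from `x` and the block minima: it is the
largest `q < x` such that `(q, x)` contains `(#(q, x) + 1) / 2` minima.
-/

open Finset

lemma Finset.insert_max'_filter_lt {α : Type*} [LinearOrder α] (S : Finset α)
    (hS : S.Nonempty) : insert (S.max' hS) (S.filter (· < S.max' hS)) = S := by
  ext z
  simp only [mem_insert, mem_filter]
  exact ⟨by rintro (rfl | ⟨hz, -⟩) <;> simp [max'_mem, *],
    fun hz => (S.le_max' z hz).eq_or_lt.imp id (⟨hz, ·⟩)⟩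

theorem LinearIndependent.of_dual_triangular {ι R M κ : Type*} [Ring R] [AddCommGroup M]
    [Module R M] [Preorder κ] [WellFoundedLT κ] (v : ι → M) (f : ι → M →ₗ[R] R)
    (w : ι → κ) (hdiag : ∀ i, f i (v i) = 1)
    (htri : ∀ i j, f i (v j) ≠ 0 → j ≠ i → w j < w i) :
    LinearIndependent R v := by
  refine linearIndependent_iff'.2 fun s g hrel i => ?_
  induction i using (InvImage.wf w wellFounded_lt).induction with | _ i ih => ?_
  intro hi
  have hoff : ∀ j ∈ s, j ≠ i → g j * f i (v j) = 0 := fun j hj hji => by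
    by_cases h : f i (v j) = 0
    · rw [h, mul_zero]
    · rw [ih j (htri i j h hji) hj, zero_mul]
  simpa [s.sum_eq_single i hoff (absurd hi), hdiag i] using congr_arg (f i) hrel

section Noncrossing

variable {m : ℕ} {P : Finpartition (univ : Finset (Fin m))}

lemma Finpartition.mem_part_univ_iff {a b : Fin m} : a ∈ P.part b ↔ P.part a = P.part b :=
  P.mem_part_iff_part_eq_part (mem_univ a) (mem_univ b)

lemma Finpartition.image_part_eq_parts {S : Finset (Fin m)}
    (hS : ∀ z, ∃ w ∈ S, P.part w = P.part z) : S.image P.part = P.parts := by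
  ext B
  simp only [mem_image]
  refine ⟨fun ⟨a, _, ha⟩ => ha ▸ P.part_mem.2 (mem_univ a), fun hB => ?_⟩
  obtain ⟨a, ha⟩ := P.nonempty_of_mem_parts hB
  obtain ⟨w, hw, hwa⟩ := hS a
  exact ⟨w, hw, hwa.trans (P.part_eq_of_mem hB ha)⟩

lemma IsNoncrossing.part_eq (hnc : IsNoncrossing P) {a b c d : Fin m} (hab : a < b)
    (hbc : b < c) (hcd : c < d) (hac : P.part c = P.part a) (hbd : P.part d = P.part b) :
    P.part a = P.part b := by
  by_contra hne
  refine hnc _ (P.part_mem.2 (mem_univ a)) _ (P.part_mem.2 (mem_univ b)) hne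
    ⟨a, b, c, d, hab, hbc, hcd, ?_, ?_, ?_, ?_⟩ <;>
    simp [Finpartition.mem_part_univ_iff, *]

lemma IsNoncrossing.mem_Ioo_of_part_eq (hnc : IsNoncrossing P) {y x z w : Fin m}
    (hyx : P.part y = P.part x) (hgap : ∀ c ∈ Ioo y x, P.part c ≠ P.part x)
    (hz : z ∈ Ioo y x) (hw : P.part w = P.part z) : w ∈ Ioo y x := by
  have hzx := hgap z hz
  rw [mem_Ioo] at hz ⊢
  by_contra hout
  rcases lt_trichotomy w y with hwy | rfl | hyw
  · exact hzx (by rw [← hyx, ← hnc.part_eq hwy hz.1 hz.2 hw.symm hyx.symm, hw])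
  · exact hzx (by rw [← hw, hyx])
  · rcases (not_lt.1 fun hwx => hout ⟨hyw, hwx⟩).eq_or_lt with rfl | hxw
    · exact hzx hw.symm
    · exact hzx (by rw [← hnc.part_eq hz.1 hz.2 hxw hyx.symm hw, hyx])

def Separated (P : Finpartition (univ : Finset (Fin m))) (S : Finset (Fin m)) : Prop :=
  ∀ a ∈ S, ∀ b ∈ S, a < b → P.part a = P.part b → ∃ c ∈ S, a < c ∧ c < b

lemma Separated.filter {S : Finset (Fin m)} (hS : Separated P S) (p : Fin m → Prop)
    [DecidablePred p] (hp : {x | p x}.OrdConnected) : Separated P (S.filter p) := by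
  intro a ha b hb hab hpart
  rw [mem_filter] at ha hb
  obtain ⟨c, hc, hac, hcb⟩ := hS a ha.1 b hb.1 hab hpart
  exact ⟨c, mem_filter.2 ⟨hc, hp.out ha.2 hb.2 ⟨hac.le, hcb.le⟩⟩, hac, hcb⟩

/-- No block meets `S` both at or below `y` and above `y`: it would cross the block of `y`
and `l`. -/
lemma IsNoncrossing.card_image_part_insert (hnc : IsNoncrossing P) {S : Finset (Fin m)}
    {y l : Fin m} (hy : y ∈ S) (hpart : P.part y = P.part l) (hlt : ∀ z ∈ S, z < l)
    (hmax : ∀ z ∈ S, P.part z = P.part l → z ≤ y) :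
    #((insert l S).image P.part) =
      #((S.filter (· ≤ y)).image P.part) + #((S.filter (¬ · ≤ y)).image P.part) := by
  rw [← card_union_of_disjoint, ← image_union, filter_union_filter_not_eq, image_insert,
    insert_eq_of_mem (mem_image.2 ⟨y, hy, hpart⟩)]
  simp only [disjoint_left, mem_image, mem_filter, not_exists, not_and, not_le]
  rintro _ ⟨z₁, ⟨-, hzy⟩, rfl⟩ z₂ ⟨hz₂, hyz⟩ hz
  have hne : P.part z₂ ≠ P.part l := fun h => (hmax z₂ hz₂ h).not_gt hyz
  rcases hzy.eq_or_lt with rfl | hzy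
  · exact hne (hz.trans hpart)
  · exact hne (by rw [hz, hnc.part_eq hzy hyz (hlt z₂ hz₂) hz hpart.symm, hpart])

lemma IsNoncrossing.card_add_one_le_two_mul_card_image_part (hnc : IsNoncrossing P)
    (S : Finset (Fin m)) (hsep : Separated P S) (hS : S.Nonempty) :
    #S + 1 ≤ 2 * #(S.image P.part) := by
  induction S using Finset.strongInduction with | H S ih => ?_
  set l := S.max' hS
  set S' := S.filter (· < l)
  have hSl : insert l S' = S := S.insert_max'_filter_lt hS
  have hlS' : l ∉ S' := by simp [S']
  have hS'S : S' ⊂ S := filter_ssubset.2 ⟨l, S.max'_mem hS, lt_irrefl l⟩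
  have hS'sep : Separated P S' := hsep.filter _ Set.ordConnected_Iio
  have hcard : #S = #S' + 1 := by rw [← card_insert_of_notMem hlS', hSl]
  by_cases hmeet : ∃ y ∈ S', P.part y = P.part l
  · obtain ⟨y, hy, hymax⟩ := exists_max_image (S'.filter (P.part · = P.part l)) id
      (by simpa [Finset.Nonempty] using hmeet)
    simp only [mem_filter, id] at hy hymax
    have hS₂ : (S'.filter (¬ · ≤ y)).Nonempty := by
      obtain ⟨c, hc, hyc, hcl⟩ :=
        hsep y (filter_subset _ _ hy.1) l (S.max'_mem hS) (mem_filter.1 hy.1).2 hy.2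
      exact ⟨c, by simp [S', hc, hyc, hcl]⟩
    have h₁ := ih _ ((filter_subset _ _).trans_ssubset hS'S)
      (hS'sep.filter _ Set.ordConnected_Iic) ⟨y, mem_filter.2 ⟨hy.1, le_rfl⟩⟩
    have h₂ := ih _ ((filter_subset _ _).trans_ssubset hS'S)
      (hS'sep.filter _ (by simp only [not_le]; exact Set.ordConnected_Ioi)) hS₂
    have himage := hnc.card_image_part_insert hy.1 hy.2 (fun z hz => (mem_filter.1 hz).2)
      fun z hz h => hymax z ⟨hz, h⟩
    rw [hSl] at himage
    have hcard' := card_filter_add_card_filter_not (s := S') (· ≤ y)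
    omega
  · have himage : #(S.image P.part) = #(S'.image P.part) + 1 := by
      rw [← hSl, image_insert, card_insert_of_notMem]
      simpa using hmeet
    rcases S'.eq_empty_or_nonempty with hS' | hS'
    · simp [hS'] at hcard himage
      omega
    · have := ih S' hS'S hS'sep hS'
      omega

lemma separated_of_ordConnected
    (hpar : ∀ a b : Fin m, P.part a = P.part b → (a : ℕ) % 2 = b % 2) {S : Finset (Fin m)}
    (hS : (S : Set (Fin m)).OrdConnected) : Separated P S := by
  intro a ha b hb hab hpart
  have := hpar a b hpart
  have hc : (a : ℕ) + 1 < b := by omega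
  have h₁ : a < ⟨a + 1, by omega⟩ := Fin.lt_def.2 (Nat.lt_succ_self a)
  have h₂ : (⟨a + 1, by omega⟩ : Fin m) < b := Fin.lt_def.2 hc
  exact ⟨_, mod_cast hS.out ha hb ⟨h₁.le, h₂.le⟩, h₁, h₂⟩

lemma separated_compl_Ioc
    (hpar : ∀ a b : Fin m, P.part a = P.part b → (a : ℕ) % 2 = b % 2) {y x : Fin m}
    (hyx : (y : ℕ) % 2 = x % 2) : Separated P (Ioc y x)ᶜ := by
  intro a ha b hb hab hpart
  have := hpar a b hpart
  simp only [mem_compl, mem_Ioc, not_and, not_le, Fin.lt_def] at ha hb hab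
  by_cases hjump : (y : ℕ) < a + 1 ∧ (a : ℕ) + 1 ≤ x
  · refine ⟨⟨x + 1, by omega⟩, ?_, ?_, ?_⟩ <;>
      simp only [mem_compl, mem_Ioc, Fin.lt_def, Fin.le_def] <;> omega
  · refine ⟨⟨a + 1, by omega⟩, ?_, ?_, ?_⟩ <;>
      simp only [mem_compl, mem_Ioc, Fin.lt_def, Fin.le_def] <;> omega

def blockMins (P : Finpartition (univ : Finset (Fin m))) : Finset (Fin m) :=
  {x | ∀ y, P.part y = P.part x → x ≤ y}

lemma mem_blockMins {x : Fin m} : x ∈ blockMins P ↔ ∀ y, P.part y = P.part x → x ≤ y := by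
  simp [blockMins]

lemma eq_of_mem_blockMins {a b : Fin m} (ha : a ∈ blockMins P) (hb : b ∈ blockMins P)
    (h : P.part a = P.part b) : a = b :=
  le_antisymm (mem_blockMins.1 ha b h.symm) (mem_blockMins.1 hb a h)

noncomputable def blockMin (P : Finpartition (univ : Finset (Fin m))) (x : Fin m) : Fin m :=
  (P.part x).min' ⟨x, P.mem_part (mem_univ x)⟩

lemma part_blockMin (x : Fin m) : P.part (blockMin P x) = P.part x :=
  Finpartition.mem_part_univ_iff.1 (min'_mem _ _)

lemma blockMin_le (x : Fin m) : blockMin P x ≤ x :=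
  min'_le _ _ (P.mem_part (mem_univ x))

lemma blockMin_mem_blockMins (x : Fin m) : blockMin P x ∈ blockMins P :=
  mem_blockMins.2 fun _ hy =>
    min'_le _ _ (Finpartition.mem_part_univ_iff.2 (hy.trans (part_blockMin x)))

lemma blockMin_eq {a x : Fin m} (hx : x ∈ blockMins P) (h : P.part a = P.part x) :
    blockMin P a = x :=
  eq_of_mem_blockMins (blockMin_mem_blockMins a) hx ((part_blockMin a).trans h)

lemma card_blockMins_inter {S : Finset (Fin m)}
    (hS : ∀ s ∈ S, ∀ y, P.part y = P.part s → y ≤ s → y ∈ S) :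
    #(blockMins P ∩ S) = #(S.image P.part) := by
  refine card_nbij P.part (fun a ha => mem_image_of_mem _ (mem_inter.1 ha).2)
    (fun a ha b hb h => eq_of_mem_blockMins (mem_inter.1 ha).1 (mem_inter.1 hb).1 h) ?_
  intro B hB
  obtain ⟨s, hs, rfl⟩ := mem_image.1 (mem_coe.1 hB)
  exact ⟨blockMin P s, mem_inter.2 ⟨blockMin_mem_blockMins s,
    hS s hs _ (part_blockMin s) (blockMin_le s)⟩, part_blockMin s⟩

lemma card_blockMins : #(blockMins P) = #P.parts := by
  simpa [P.image_part_eq_parts fun z => ⟨z, mem_univ z, rfl⟩] using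
    card_blockMins_inter (P := P) (S := univ) (by simp)

def IsBalanced (A : Finset (Fin m)) (q x : Fin m) : Prop :=
  2 * #(A ∩ Ioo q x) = #(Ioo q x) + 1

end Noncrossing

section Kreweras

variable {n : ℕ} {P Q : Finpartition (univ : Finset (Fin (2 * n)))} {A : Finset (Fin (2 * n))}

lemma IsKrewerasPair.mod_two_eq (hK : IsKrewerasPair P) (a b : Fin (2 * n))
    (h : P.part a = P.part b) : (a : ℕ) % 2 = b % 2 := by
  have ha : a ∈ P.part b := Finpartition.mem_part_univ_iff.2 h
  have hb : b ∈ P.part b := P.mem_part (mem_univ b)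
  rcases hK.2.1 _ (P.part_mem.2 (mem_univ b)) with h | h <;> rw [h a ha, h b hb]

/-- Between two consecutive elements `y < x` of a block, the noncrossing condition confines the
blocks to `(y, x)`, and the lower bound is attained both there and on the complement, since
together they account for all `n + 1` blocks. -/
lemma IsKrewerasPair.two_mul_card_image_part_Ioo (hK : IsKrewerasPair P)
    {y x : Fin (2 * n)} (hyx : y < x) (hpart : P.part y = P.part x)
    (hgap : ∀ c ∈ Ioo y x, P.part c ≠ P.part x) :
    2 * #((Ioo y x).image P.part) = #(Ioo y x) + 1 := by
  have hmod := hK.mod_two_eq y x hpart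
  have hG := hK.1.card_add_one_le_two_mul_card_image_part (Ioo y x)
    (separated_of_ordConnected hK.mod_two_eq (by simpa using Set.ordConnected_Ioo))
    ⟨⟨y + 1, by omega⟩, by simp only [mem_Ioo, Fin.lt_def]; omega⟩
  have hR := hK.1.card_add_one_le_two_mul_card_image_part (Ioc y x)ᶜ
    (separated_compl_Ioc hK.mod_two_eq hmod) ⟨y, by simp⟩
  have hparts : #((Ioo y x).image P.part) + #((Ioc y x)ᶜ.image P.part) = n + 1 := by
    rw [← hK.2.2, ← card_union_of_disjoint, ← image_union, P.image_part_eq_parts]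
    · intro z
      by_cases hz : z = x
      · exact ⟨y, by simp, hz ▸ hpart⟩
      · exact ⟨z, by simp only [mem_union, mem_Ioo, mem_compl, mem_Ioc]; omega, rfl⟩
    · simp only [disjoint_left, mem_image, not_exists, not_and]
      rintro _ ⟨z, hz, rfl⟩ w hw hwz
      have := hK.1.mem_Ioo_of_part_eq hpart hgap hz hwz
      simp only [mem_compl, mem_Ioc, mem_Ioo] at hw this
      exact hw ⟨this.1, this.2.le⟩
  have hcardR : #(Ioc y x)ᶜ = 2 * n - (x - y) := by
    rw [card_compl, Fintype.card_fin, Fin.card_Ioc]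
  rw [Fin.card_Ioo] at hG ⊢
  omega

lemma IsKrewerasPair.isGreatest_isBalanced (hK : IsKrewerasPair P) {p x : Fin (2 * n)}
    (hpx : p < x) (hpart : P.part p = P.part x) (hgap : ∀ c ∈ Ioo p x, P.part c ≠ P.part x) :
    IsGreatest {q | q < x ∧ IsBalanced (blockMins P) q x} p := by
  have hclosed : ∀ s ∈ Ioo p x, ∀ y, P.part y = P.part s → y ∈ Ioo p x :=
    fun s hs y hy => hK.1.mem_Ioo_of_part_eq hpart hgap hs hy
  have hbal : IsBalanced (blockMins P) p x := by
    rw [IsBalanced, card_blockMins_inter fun s hs y hy _ => hclosed s hs y hy]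
    exact hK.two_mul_card_image_part_Ioo hpx hpart hgap
  refine ⟨⟨hpx, hbal⟩, fun q ⟨hqx, hq⟩ => not_lt.1 fun hpq => ?_⟩
  have hlow : #(Ioc p q) + 1 ≤ 2 * #(blockMins P ∩ Ioc p q) := by
    rw [card_blockMins_inter fun s hs y hy hys => ?_]
    · exact hK.1.card_add_one_le_two_mul_card_image_part _
        (separated_of_ordConnected hK.mod_two_eq (by simpa using Set.ordConnected_Ioc))
        ⟨q, by simp [hpq]⟩
    · have hs' := mem_Ioc.1 hs
      have := mem_Ioo.1 (hclosed s (mem_Ioo.2 ⟨hs'.1, hs'.2.trans_lt hqx⟩) y hy)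
      exact mem_Ioc.2 ⟨this.1, hys.trans hs'.2⟩
  have hsplit : #(blockMins P ∩ Ioo p x) =
      #(blockMins P ∩ Ioc p q) + #(blockMins P ∩ Ioo q x) := by
    rw [← card_union_of_disjoint, ← inter_union_distrib_left]
    · congr 2
      ext z
      simp only [mem_union, mem_Ioc, mem_Ioo]
      omega
    · exact Disjoint.mono inter_subset_right inter_subset_right
        (disjoint_left.2 fun z h₁ h₂ => by simp only [mem_Ioc, mem_Ioo] at h₁ h₂; omega)
  unfold IsBalanced at hbal hq
  rw [Fin.card_Ioo] at hbal hq
  rw [Fin.card_Ioc] at hlow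
  omega

lemma IsKrewerasPair.exists_prev (hK : IsKrewerasPair P) {x : Fin (2 * n)}
    (hx : x ∉ blockMins P) :
    ∃ p < x, P.part p = P.part x ∧ (∀ y < x, P.part y = P.part x → y ≤ p) ∧
      IsGreatest {q | q < x ∧ IsBalanced (blockMins P) q x} p := by
  simp only [mem_blockMins, not_forall, not_le] at hx
  obtain ⟨y, hy, hyx⟩ := hx
  obtain ⟨p, hp, hpmax⟩ := exists_max_image ({z | z < x ∧ P.part z = P.part x} : Finset _) id
    ⟨y, by simp [hy, hyx]⟩
  simp only [mem_filter, mem_univ, true_and, id] at hp hpmax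
  refine ⟨p, hp.1, hp.2, fun y hyx hy => hpmax y ⟨hyx, hy⟩,
    hK.isGreatest_isBalanced hp.1 hp.2 fun c hc h => ?_⟩
  exact (mem_Ioo.1 hc).1.not_ge (hpmax c ⟨(mem_Ioo.1 hc).2, h⟩)

lemma IsKrewerasPair.part_eq_of_blockMins_eq_of_le (hP : IsKrewerasPair P)
    (hQ : IsKrewerasPair Q) (h : blockMins P = blockMins Q) (x : Fin (2 * n)) :
    ∀ y ≤ x, P.part y = P.part x → Q.part y = Q.part x := by
  induction x using WellFoundedLT.induction with | _ x ih => ?_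
  intro y hyx hy
  rcases hyx.eq_or_lt with rfl | hyx
  · rfl
  have hx : x ∉ blockMins P := fun hx => (mem_blockMins.1 hx y hy).not_gt hyx
  obtain ⟨p, hpx, hpP, hmax, hgreatestP⟩ := hP.exists_prev hx
  obtain ⟨p', -, hpQ, -, hgreatestQ⟩ := hQ.exists_prev (h ▸ hx)
  rw [← h] at hgreatestQ
  obtain rfl := hgreatestP.unique hgreatestQ
  rw [ih p hpx y (hmax y hyx hy) (hy.trans hpP.symm), hpQ]

lemma IsKrewerasPair.part_eq_of_blockMins_eq (hP : IsKrewerasPair P) (hQ : IsKrewerasPair Q)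
    (h : blockMins P = blockMins Q) {x y : Fin (2 * n)} (hxy : P.part y = P.part x) :
    Q.part y = Q.part x := by
  rcases le_total y x with hyx | hxy'
  · exact hP.part_eq_of_blockMins_eq_of_le hQ h x y hyx hxy
  · exact (hP.part_eq_of_blockMins_eq_of_le hQ h y x hxy' hxy.symm).symm

lemma IsKrewerasPair.eq_of_blockMins_eq (hP : IsKrewerasPair P) (hQ : IsKrewerasPair Q)
    (h : blockMins P = blockMins Q) : P = Q := by
  have hpart : P.part = Q.part := funext fun x => by
    ext y
    simp only [Finpartition.mem_part_univ_iff]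
    exact ⟨hP.part_eq_of_blockMins_eq hQ h, hQ.part_eq_of_blockMins_eq hP h.symm⟩
  ext1
  rw [← P.image_part_eq_parts fun z => ⟨z, mem_univ z, rfl⟩,
    ← Q.image_part_eq_parts fun z => ⟨z, mem_univ z, rfl⟩, hpart]

lemma Concordant.exists_mem (hA : Concordant A P) (x : Fin (2 * n)) :
    ∃ a ∈ A, P.part a = P.part x := by
  obtain ⟨a, ha⟩ := card_pos.1 ((hA _ (P.part_mem.2 (mem_univ x))).symm ▸ one_pos)
  exact ⟨a, (mem_inter.1 ha).1, Finpartition.mem_part_univ_iff.1 (mem_inter.1 ha).2⟩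

lemma Concordant.eq_of_part_eq (hA : Concordant A P) {a b : Fin (2 * n)} (ha : a ∈ A)
    (hb : b ∈ A) (h : P.part a = P.part b) : a = b :=
  card_le_one.1 (hA _ (P.part_mem.2 (mem_univ b))).le a
    (mem_inter.2 ⟨ha, Finpartition.mem_part_univ_iff.2 h⟩) b
    (mem_inter.2 ⟨hb, P.mem_part (mem_univ b)⟩)

lemma concordant_blockMins (P : Finpartition (univ : Finset (Fin (2 * n)))) :
    Concordant (blockMins P) P := by
  intro B hB
  obtain ⟨x, hx⟩ := P.nonempty_of_mem_parts hB
  rw [← P.part_eq_of_mem hB hx, card_eq_one]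
  refine ⟨blockMin P x, eq_singleton_iff_unique_mem.2 ⟨mem_inter.2 ⟨blockMin_mem_blockMins x,
    Finpartition.mem_part_univ_iff.2 (part_blockMin x)⟩, fun a ha => ?_⟩⟩
  rw [mem_inter, Finpartition.mem_part_univ_iff] at ha
  exact (blockMin_eq ha.1 ha.2.symm).symm

/-- Moving each element of a transversal down to the minimum of its block decreases the sum. -/
lemma sum_blockMins_lt (hA : Concordant A P) (hne : A ≠ blockMins P) :
    ∑ x ∈ blockMins P, (x : ℕ) < ∑ a ∈ A, (a : ℕ) := by
  have hsum : ∑ a ∈ A, (blockMin P a : ℕ) = ∑ x ∈ blockMins P, (x : ℕ) := by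
    refine sum_nbij (blockMin P) (fun a _ => blockMin_mem_blockMins a)
      (fun a ha b hb h => hA.eq_of_part_eq ha hb ?_) (fun x hx => ?_) fun _ _ => rfl
    · rw [← part_blockMin a, h, part_blockMin]
    · obtain ⟨a, ha, hax⟩ := hA.exists_mem x
      exact ⟨a, ha, blockMin_eq hx hax⟩
  rw [← hsum]
  refine sum_lt_sum (fun a _ => Fin.le_def.1 (blockMin_le a)) ?_
  by_contra! hmin
  have hfix : ∀ a ∈ A, blockMin P a = a := fun a ha =>
    le_antisymm (blockMin_le a) (Fin.le_def.2 (hmin a ha))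
  refine hne (Subset.antisymm (fun a ha => hfix a ha ▸ blockMin_mem_blockMins a) fun x hx => ?_)
  obtain ⟨a, ha, hax⟩ := hA.exists_mem x
  rwa [← blockMin_eq hx hax, hfix a ha]

end Kreweras

noncomputable def wedgeBasis (n : ℕ) :
    Module.Basis (Set.powersetCard (Fin (2 * n)) (n + 1)) ℝ
      (⋀[ℝ]^(n + 1) (Fin (2 * n) → ℝ)) :=
  (Pi.basisFun ℝ (Fin (2 * n))).exteriorPower (n + 1)

lemma eWedge_eq_wedgeBasis (n : ℕ) (A : Finset (Fin (2 * n))) (h : A.card = n + 1) :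
    eWedge n A h = wedgeBasis n ⟨A, Set.powersetCard.mem_iff.mpr h⟩ := by
  simp only [wedgeBasis, exteriorPower.basis_apply, exteriorPower.ιMulti_family, eWedge,
    exteriorPower.ιMulti_apply_coe, Function.comp_def, Pi.basisFun_apply,
    Set.powersetCard.ofFinEmbEquiv_symm_apply]
  rfl

noncomputable def fSigmaVec (n : ℕ) (P : Finpartition (univ : Finset (Fin (2 * n)))) :
    ⋀[ℝ]^(n + 1) (Fin (2 * n) → ℝ) :=
  ∑ s with Concordant s.1 P, wedgeBasis n s

lemma coe_fSigmaVec (n : ℕ) (P : Finpartition (univ : Finset (Fin (2 * n)))) :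
    (fSigmaVec n P : ExteriorAlgebra ℝ (Fin (2 * n) → ℝ)) = fSigma n P := by
  rw [fSigmaVec, fSigma, Submodule.coe_sum, sum_filter, ← univ_eq_attach]
  refine Fintype.sum_equiv (Equiv.subtypeEquivRight fun A => ?_) _ _ fun A => ?_
  · simp [Set.powersetCard.mem_iff]
  · simp [eWedge_eq_wedgeBasis]

lemma wedgeBasis_repr_fSigmaVec (n : ℕ) (P : Finpartition (univ : Finset (Fin (2 * n))))
    (s : Set.powersetCard (Fin (2 * n)) (n + 1)) :
    (wedgeBasis n).repr (fSigmaVec n P) s = if Concordant s.1 P then 1 else 0 := by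
  simp [fSigmaVec, Finsupp.single_apply]

/-- The vectors f_σ, as σ ranges over the noncrossing partitions of [n]
(equivalently, over the Kreweras pairs (σ, σ̃)), are linearly independent in
Λ^{n+1}(ℝ^{2n}). -/
theorem fSigma_linearIndependent (n : ℕ) :
    LinearIndependent ℝ
      (fun P : {P : Finpartition (Finset.univ : Finset (Fin (2 * n))) //
          IsKrewerasPair P} => fSigma n P.1) := by
  have hcard (P : {P : Finpartition (univ : Finset (Fin (2 * n))) // IsKrewerasPair P}) :
      blockMins P.1 ∈ Set.powersetCard (Fin (2 * n)) (n + 1) := by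
    rw [Set.powersetCard.mem_iff, card_blockMins, P.2.2.2]
  have hvec := LinearIndependent.of_dual_triangular (fun P => fSigmaVec n P.1)
    (fun P => (wedgeBasis n).coord ⟨blockMins P.1, hcard P⟩)
    (fun P => ∑ x ∈ blockMins P.1, (x : ℕ))
    (fun P => by simp [wedgeBasis_repr_fSigmaVec, concordant_blockMins])
    fun P Q hPQ hne => by
      simp only [Module.Basis.coord_apply, wedgeBasis_repr_fSigmaVec, ne_eq, ite_eq_right_iff,
        one_ne_zero, imp_false, not_not] at hPQ
      refine sum_blockMins_lt hPQ fun h => hne (Subtype.ext ?_)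
      exact Q.2.eq_of_blockMins_eq P.2 h.symm
  simpa only [Function.comp_def, Submodule.subtype_apply, coe_fSigmaVec] using
    hvec.map' (Submodule.subtype _) (Submodule.ker_subtype _)
end

section
/- Let M be the (n+1)×2n matrix with first row (0,1,0,1,...,0,1) and, for 1 ≤ i ≤ n, row i+1 having a 1 in column 2i-1, the entry S_{ij} in column 2j, and zeros in the other odd columns. Then all rows of M are pairwise isotropic for the form Omega^D if and only if the n×n matrix with (i,j) entry S_{j(i-1)} - S_{ji} (indices of S periodic mod n) is symmetric. -/
/-- Index i-1 taken mod n. -/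
def prevIdx {n : ℕ} (i : Fin n) : Fin n :=
  ⟨((i : ℕ) + n - 1) % n, Nat.mod_lt _ i.pos⟩

/-- Row i+1 of the Schubert chart matrix: e_i + ∑_j S_{ij} e_{j̃}. -/
def rowS {n : ℕ} (S : Matrix (Fin n) (Fin n) ℝ) (i : Fin n) : Fin (2 * n) → ℝ :=
  fun k =>
    if (k : ℕ) = 2 * (i : ℕ) then 1
    else if h : (k : ℕ) % 2 = 1 then S i ⟨(k : ℕ) / 2, by omega⟩ else 0

lemma val_prevIdx {n : ℕ} (j : Fin n) :
    (prevIdx j : ℕ) = if (j : ℕ) = 0 then n - 1 else j - 1 := by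
  have hj := j.is_lt
  change ((j : ℕ) + n - 1) % n = _
  split_ifs with h
  · rw [h, zero_add, Nat.mod_eq_of_lt (by omega)]
  · rw [show (j : ℕ) + n - 1 = (j - 1) + n by omega, Nat.add_mod_right,
      Nat.mod_eq_of_lt (by omega)]

lemma succ_mod_eq_iff_eq_prevIdx {n k : ℕ} (j : Fin n) (hk : k < n) :
    (k + 1) % n = j ↔ k = prevIdx j := by
  have hj := j.is_lt
  rcases (Nat.lt_or_ge (k + 1) n) with h | h
  · rw [Nat.mod_eq_of_lt h, val_prevIdx]
    split_ifs <;> omega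
  · rw [show k + 1 = n by omega, Nat.mod_self, val_prevIdx]
    split_ifs <;> omega

lemma sum_range_ite_succ_mod_eq {M : Type*} [AddCommMonoid M] {n : ℕ} (j : Fin n) (f : ℕ → M) :
    ∑ k ∈ Finset.range n, (if (k + 1) % n = j then f k else 0) = f (prevIdx j) := by
  rw [Finset.sum_congr rfl fun k hk =>
      if_congr (succ_mod_eq_iff_eq_prevIdx j (Finset.mem_range.mp hk)) rfl rfl,
    Finset.sum_ite_eq', if_pos (Finset.mem_range.mpr (prevIdx j).is_lt)]

-- The first row `(0,1,0,1,…,0,1)` of the chart matrix.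
def tildeOnes (n : ℕ) : Fin (2 * n) → ℝ := fun k => if (k : ℕ) % 2 = 1 then 1 else 0

lemma unmCoord_tildeOnes {n : ℕ} (k : ℕ) : unmCoord (tildeOnes n) k = 0 := by
  simp [unmCoord, tildeOnes]

lemma tldCoord_tildeOnes {n k : ℕ} (hk : k < n) : tldCoord (tildeOnes n) k = 1 := by
  simp [tldCoord, tildeOnes, Nat.add_mod, show 2 * k + 1 < 2 * n by omega]

lemma unmCoord_rowS {n : ℕ} (S : Matrix (Fin n) (Fin n) ℝ) (i : Fin n) {k : ℕ} (hk : k < n) :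
    unmCoord (rowS S i) k = if k = i then 1 else 0 := by
  simp [unmCoord, rowS, show 2 * k < 2 * n by omega]

lemma tldCoord_rowS {n : ℕ} (S : Matrix (Fin n) (Fin n) ℝ) (i : Fin n) {k : ℕ} (hk : k < n) :
    tldCoord (rowS S i) k = S i ⟨k, hk⟩ := by
  rw [tldCoord, dif_pos (by omega)]
  dsimp only [rowS]
  rw [if_neg (by omega), dif_pos (by omega)]
  exact congrArg (S i) (Fin.ext (show (2 * k + 1) / 2 = k by omega))

lemma OmegaD_self (n : ℕ) (x : Fin (2 * n) → ℝ) : OmegaD n x x = 0 := by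
  simp [OmegaD, mul_comm]

lemma OmegaD_swap (n : ℕ) (x y : Fin (2 * n) → ℝ) : OmegaD n y x = -OmegaD n x y := by
  simp only [OmegaD, neg_add, ← Finset.sum_neg_distrib]
  congr 1 <;> exact Finset.sum_congr rfl fun _ _ => by ring

lemma OmegaD_of_unmCoord_eq_single {n : ℕ} {x : Fin (2 * n) → ℝ} (i : Fin n)
    (hx : ∀ k < n, unmCoord x k = if k = i then 1 else 0) (y : Fin (2 * n) → ℝ) :
    OmegaD n x y = tldCoord y i - tldCoord y (prevIdx i) +
      ∑ k ∈ Finset.range n, tldCoord x k * (unmCoord y ((k + 1) % n) - unmCoord y k) := by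
  have hn : 0 < n := i.pos
  have h₁ : ∀ k ∈ Finset.range n, unmCoord x k * tldCoord y k - tldCoord x k * unmCoord y k =
      (if k = i then tldCoord y k else 0) - tldCoord x k * unmCoord y k := by
    intro k hk
    rw [hx k (Finset.mem_range.mp hk)]
    split_ifs <;> ring
  have h₂ : ∀ k ∈ Finset.range n, tldCoord x k * unmCoord y ((k + 1) % n) -
      unmCoord x ((k + 1) % n) * tldCoord y k =
      tldCoord x k * unmCoord y ((k + 1) % n) -
        (if (k + 1) % n = i then tldCoord y k else 0) := by
    intro k _
    rw [hx _ (Nat.mod_lt _ hn)]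
    split_ifs <;> ring
  rw [OmegaD, Finset.sum_congr rfl h₁, Finset.sum_congr rfl h₂, Finset.sum_sub_distrib,
    Finset.sum_sub_distrib, Finset.sum_ite_eq', if_pos (Finset.mem_range.mpr i.is_lt),
    sum_range_ite_succ_mod_eq]
  simp only [mul_sub, Finset.sum_sub_distrib]
  ring

lemma OmegaD_rowS_tildeOnes {n : ℕ} (S : Matrix (Fin n) (Fin n) ℝ) (i : Fin n) :
    OmegaD n (rowS S i) (tildeOnes n) = 0 := by
  rw [OmegaD_of_unmCoord_eq_single i (fun k hk => unmCoord_rowS S i hk),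
    tldCoord_tildeOnes i.is_lt, tldCoord_tildeOnes (prevIdx i).is_lt]
  simp [unmCoord_tildeOnes]

lemma OmegaD_rowS_rowS {n : ℕ} (S : Matrix (Fin n) (Fin n) ℝ) (i j : Fin n) :
    OmegaD n (rowS S i) (rowS S j) = S j i - S j (prevIdx i) + (S i (prevIdx j) - S i j) := by
  have hn : 0 < n := i.pos
  rw [OmegaD_of_unmCoord_eq_single i (fun k hk => unmCoord_rowS S i hk),
    tldCoord_rowS S j i.is_lt, tldCoord_rowS S j (prevIdx i).is_lt]
  have h : ∀ k ∈ Finset.range n,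
      tldCoord (rowS S i) k * (unmCoord (rowS S j) ((k + 1) % n) - unmCoord (rowS S j) k) =
        (if (k + 1) % n = j then tldCoord (rowS S i) k else 0) -
          (if k = j then tldCoord (rowS S i) k else 0) := by
    intro k hk
    rw [unmCoord_rowS S j (Nat.mod_lt _ hn), unmCoord_rowS S j (Finset.mem_range.mp hk)]
    split_ifs <;> ring
  rw [Finset.sum_congr rfl h, Finset.sum_sub_distrib, sum_range_ite_succ_mod_eq,
    Finset.sum_ite_eq', if_pos (Finset.mem_range.mpr j.is_lt),
    tldCoord_rowS S i (prevIdx j).is_lt, tldCoord_rowS S i j.is_lt]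

/-- The rows of the Schubert chart matrix M (first row (0,1,0,1,…,0,1) and row
i+1 equal to e_i + ∑_j S_{ij} e_{j̃}) are pairwise Ω^D-isotropic if and only if
the matrix with (i,j) entry S_{j(i-1)} - S_{ji} is symmetric. -/
theorem rows_isotropic_iff_symm (n : ℕ) (S : Matrix (Fin n) (Fin n) ℝ)
    (M : Fin (n + 1) → Fin (2 * n) → ℝ)
    (hM : M = fun p : Fin (n + 1) =>
      if h : (p : ℕ) = 0
      then (fun k : Fin (2 * n) => if (k : ℕ) % 2 = 1 then (1 : ℝ) else 0)
      else rowS S ⟨(p : ℕ) - 1, by omega⟩) :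
    (∀ p q : Fin (n + 1), OmegaD n (M p) (M q) = 0) ↔
      (∀ i j : Fin n,
        S j (prevIdx i) - S j i = S i (prevIdx j) - S i j) := by
  have hM₀ : M 0 = tildeOnes n := by subst hM; rfl
  have hM_succ : ∀ i : Fin n, M i.succ = rowS S i := by subst hM; simp
  simp only [Fin.forall_fin_succ, hM₀, hM_succ, OmegaD_self, OmegaD_rowS_tildeOnes,
    OmegaD_swap n (rowS S _) (tildeOnes n), OmegaD_rowS_rowS, neg_zero, true_and,
    implies_true]
  exact forall₂_congr fun i j => by constructor <;> intro h <;> linarith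
end
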